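/- arXiv:1501.02793 — 10 statements merged into one kernel-verified Lean document; each statement's English description precedes it below -/
import Mathlib

section
/- Assume there exist constants C > 0 and γ₀ ≥ 0 such that for all nonzero integers k₁, k₃ one has k₁δ₁ + k₃δ₃ ≠ 0 and 1/|k₁δ₁ + k₃δ₃| ≤ C · (k₁² + k₃²)^{γ₀/2}. Then there exists a constant C' > 0 such that for all nonzero integers k₁, k₃: 1/|k₁δ₁ + k₃δ₃| ≤ C' · min(|k₁|, |k₃|)^{γ₀}. -/
set_option maxHeartbeats 1000000 in
theorem stmt1 (δ₁ δ₃ : ℝ) (hδ₁ : δ₁ ≠ 0) (hδ₃ : δ₃ = 1 + δ₁) (hδ₃' : δ₃ ≠ 0)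
    (C : ℝ) (hC : 0 < C) (γ₀ : ℝ) (hγ₀ : 0 ≤ γ₀)
    (h : ∀ k₁ k₃ : ℤ, k₁ ≠ 0 → k₃ ≠ 0 →
      (k₁ : ℝ) * δ₁ + (k₃ : ℝ) * δ₃ ≠ 0 ∧
      1 / |(k₁ : ℝ) * δ₁ + (k₃ : ℝ) * δ₃| ≤
        C * (((k₁ : ℝ) ^ 2 + (k₃ : ℝ) ^ 2) ^ (γ₀ / 2))) :
    ∃ C' > (0 : ℝ), ∀ k₁ k₃ : ℤ, k₁ ≠ 0 → k₃ ≠ 0 →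
      1 / |(k₁ : ℝ) * δ₁ + (k₃ : ℝ) * δ₃| ≤
        C' * (min |(k₁ : ℝ)| |(k₃ : ℝ)|) ^ γ₀ := by
  have hδ₁' : (0:ℝ) < |δ₁| := abs_pos.2 hδ₁
  have hδ₃'' : (0:ℝ) < |δ₃| := abs_pos.2 hδ₃'
  set A : ℝ := (|δ₃| + 1) / |δ₁| with hA
  set B : ℝ := (|δ₁| + 1) / |δ₃| with hB
  set D : ℝ := A ^ 2 + B ^ 2 + 1 with hD
  have hApos : 0 < A := div_pos (by positivity) hδ₁'
  have hBpos : 0 < B := div_pos (by positivity) hδ₃''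
  have hDpos : (0:ℝ) < D := by positivity
  clear_value A B D
  refine ⟨C * D ^ (γ₀ / 2) + 1, by positivity, ?_⟩
  intro k₁ k₃ hk₁ hk₃
  obtain ⟨hne, hb⟩ := h k₁ k₃ hk₁ hk₃
  set S := (k₁ : ℝ) * δ₁ + (k₃ : ℝ) * δ₃ with hS
  have hSpos : 0 < |S| := abs_pos.2 hne
  have hk₁1 : (1:ℝ) ≤ |(k₁:ℝ)| := by
    rw [← Int.cast_abs]; exact_mod_cast Int.one_le_abs hk₁
  have hk₃1 : (1:ℝ) ≤ |(k₃:ℝ)| := by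
    rw [← Int.cast_abs]; exact_mod_cast Int.one_le_abs hk₃
  set m : ℝ := min |(k₁:ℝ)| |(k₃:ℝ)| with hm
  clear_value S
  have hm1 : (1:ℝ) ≤ m := le_min hk₁1 hk₃1
  have hm0 : (0:ℝ) ≤ m := by linarith
  have hmγ : (1:ℝ) ≤ m ^ γ₀ := Real.one_le_rpow hm1 hγ₀
  clear_value m
  have hCD : (0:ℝ) ≤ C * D ^ (γ₀ / 2) := by positivity
  by_cases hcase : 1 ≤ |S|
  · have h1 : 1 / |S| ≤ 1 := by
      rw [div_le_one hSpos]; exact hcase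
    nlinarith
  · push_neg at hcase
    have e1 : |(k₁:ℝ)| * |δ₁| ≤ |(k₃:ℝ)| * (|δ₃| + 1) := by
      have habs : |(k₁:ℝ) * δ₁| ≤ |S| + |(k₃:ℝ) * δ₃| := by
        calc |(k₁:ℝ) * δ₁| = |S - (k₃:ℝ) * δ₃| := by rw [hS]; ring_nf
          _ ≤ |S| + |(k₃:ℝ) * δ₃| := (abs_sub _ _)
      rw [abs_mul, abs_mul] at habs
      nlinarith
    have e3 : |(k₃:ℝ)| * |δ₃| ≤ |(k₁:ℝ)| * (|δ₁| + 1) := by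
      have habs : |(k₃:ℝ) * δ₃| ≤ |S| + |(k₁:ℝ) * δ₁| := by
        calc |(k₃:ℝ) * δ₃| = |S - (k₁:ℝ) * δ₁| := by rw [hS]; ring_nf
          _ ≤ |S| + |(k₁:ℝ) * δ₁| := (abs_sub _ _)
      rw [abs_mul, abs_mul] at habs
      nlinarith
    have hk₁A : |(k₁:ℝ)| ≤ |(k₃:ℝ)| * A := by
      rw [hA, ← mul_div_assoc, le_div_iff₀ hδ₁']
      linarith [e1]
    have hk₃B : |(k₃:ℝ)| ≤ |(k₁:ℝ)| * B := by
      rw [hB, ← mul_div_assoc, le_div_iff₀ hδ₃'']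
      linarith [e3]
    have key : (k₁:ℝ) ^ 2 + (k₃:ℝ) ^ 2 ≤ D * m ^ 2 := by
      have s1 : |(k₁:ℝ)| ^ 2 = (k₁:ℝ) ^ 2 := sq_abs _
      have s3 : |(k₃:ℝ)| ^ 2 = (k₃:ℝ) ^ 2 := sq_abs _
      have t1 : |(k₁:ℝ)| ^ 2 ≤ |(k₃:ℝ)| ^ 2 * A ^ 2 := by
        calc |(k₁:ℝ)| ^ 2 ≤ (|(k₃:ℝ)| * A) ^ 2 :=
              pow_le_pow_left₀ (abs_nonneg _) hk₁A 2
          _ = |(k₃:ℝ)| ^ 2 * A ^ 2 := by ring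
      have t3 : |(k₃:ℝ)| ^ 2 ≤ |(k₁:ℝ)| ^ 2 * B ^ 2 := by
        calc |(k₃:ℝ)| ^ 2 ≤ (|(k₁:ℝ)| * B) ^ 2 :=
              pow_le_pow_left₀ (abs_nonneg _) hk₃B 2
          _ = |(k₁:ℝ)| ^ 2 * B ^ 2 := by ring
      rcases min_cases |(k₁:ℝ)| |(k₃:ℝ)| with ⟨heq, hle⟩ | ⟨heq, hle⟩
      · rw [hm, heq, hD]
        have hA2 : 0 ≤ A ^ 2 * |(k₁:ℝ)| ^ 2 := by positivity
        linarith [t3, hA2, s1, s3]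
      · rw [hm, heq, hD]
        have hB2 : 0 ≤ B ^ 2 * |(k₃:ℝ)| ^ 2 := by positivity
        linarith [t1, hB2, s1, s3]
    have h2 : ((k₁:ℝ) ^ 2 + (k₃:ℝ) ^ 2) ^ (γ₀ / 2) ≤ (D * m ^ 2) ^ (γ₀ / 2) :=
      Real.rpow_le_rpow (by positivity) key (by positivity)
    have h3 : (D * m ^ 2) ^ (γ₀ / 2) = D ^ (γ₀ / 2) * m ^ γ₀ := by
      rw [Real.mul_rpow (le_of_lt hDpos) (by positivity),
        ← Real.rpow_natCast m 2, ← Real.rpow_mul hm0]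
      norm_num
      exact Or.inl (by rw [show (2:ℝ) * (γ₀ / 2) = γ₀ by ring])
    have h4 : 1 / |S| ≤ C * (D ^ (γ₀ / 2) * m ^ γ₀) := by
      calc 1 / |S| ≤ C * (((k₁:ℝ) ^ 2 + (k₃:ℝ) ^ 2) ^ (γ₀ / 2)) := hb
        _ ≤ C * ((D * m ^ 2) ^ (γ₀ / 2)) := by
            exact mul_le_mul_of_nonneg_left h2 (le_of_lt hC)
        _ = C * (D ^ (γ₀ / 2) * m ^ γ₀) := by rw [h3]
    have h5 : C * (D ^ (γ₀ / 2) * m ^ γ₀) ≤ (C * D ^ (γ₀ / 2) + 1) * m ^ γ₀ := by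
      nlinarith [hmγ]
    linarith
end

section
/- Under the small divisor hypothesis, there exists a constant C' > 0 such that for all integers k, ℓ with ℓ ≠ 0 and ℓ ≠ k: |(k−ℓ)·ℓ / ((k−ℓ)δ₁ + ℓδ₃)| ≤ C' · |ℓ|^{γ₀+2}. -/
/-! Write `a = k - ℓ`, `b = ℓ`. If `|a δ₁| ≤ 2 |b δ₃|`, then `|a| ≲ |b|` and the small divisor
bound `1 / |a δ₁ + b δ₃| ≤ C₀ |b| ^ γ₀` give `|a b / (a δ₁ + b δ₃)| ≲ |b| ^ (γ₀ + 2)`; otherwise the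
denominator is at least `|a δ₁| / 2` and the quotient is `≲ |b|`. -/

theorem abs_le_two_mul_abs_add {x y : ℝ} (h : 2 * |y| ≤ |x|) : |x| ≤ 2 * |x + y| := by
  have := abs_add_le (x + y) (-y)
  rw [add_neg_cancel_right, abs_neg] at this
  linarith

theorem abs_mul_div_linear_le {a b δ₁ δ₃ M : ℝ} (hδ₁ : δ₁ ≠ 0)
    (hM : 1 / |a * δ₁ + b * δ₃| ≤ M) :
    |a * b / (a * δ₁ + b * δ₃)| ≤ 2 * max 1 (|b| * |δ₃| * M) * |b| / |δ₁| := by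
  have hδ₁' : 0 < |δ₁| := abs_pos.2 hδ₁
  rw [abs_div, abs_mul]
  rcases le_or_gt (|a| * |δ₁|) (2 * (|b| * |δ₃|)) with hsmall | hlarge
  · have hM₀ : 0 ≤ M := (one_div_nonneg.2 (abs_nonneg _)).trans hM
    calc |a| * |b| / |a * δ₁ + b * δ₃| = |a| * |b| * (1 / |a * δ₁ + b * δ₃|) := by ring
      _ ≤ |a| * |b| * M := by gcongr
      _ ≤ 2 * (|b| * |δ₃|) / |δ₁| * |b| * M := by gcongr; rwa [le_div_iff₀ hδ₁']
      _ = 2 * (|b| * |δ₃| * M) * |b| / |δ₁| := by ring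
      _ ≤ 2 * max 1 (|b| * |δ₃| * M) * |b| / |δ₁| := by gcongr; exact le_max_right _ _
  · have hD : |a| * |δ₁| ≤ 2 * |a * δ₁ + b * δ₃| := by
      rw [← abs_mul]
      exact abs_le_two_mul_abs_add (by simp only [abs_mul]; linarith)
    have hD₀ : 0 < |a * δ₁ + b * δ₃| := by
      nlinarith [abs_nonneg b, abs_nonneg δ₃]
    calc |a| * |b| / |a * δ₁ + b * δ₃| ≤ 2 * 1 * |b| / |δ₁| := by
          rw [div_le_div_iff₀ hD₀ hδ₁']
          nlinarith [abs_nonneg b]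
      _ ≤ 2 * max 1 (|b| * |δ₃| * M) * |b| / |δ₁| := by gcongr; exact le_max_left _ _

theorem max_one_mul_le {c x : ℝ} (hx : 1 ≤ x) : max 1 (c * x) ≤ max 1 c * x :=
  max_le (one_le_mul_of_one_le_of_one_le (le_max_left _ _) hx)
    (mul_le_mul_of_nonneg_right (le_max_right _ _) (zero_le_one.trans hx))

theorem stmt2_general (δ₁ δ₃ : ℝ) (hδ₁ : δ₁ ≠ 0)
    (C₀ γ₀ : ℝ) (hC₀ : 0 < C₀) (hγ₀ : 0 ≤ γ₀)
    (h : ∀ k₁ k₃ : ℤ, k₁ ≠ 0 → k₃ ≠ 0 →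
      (k₁ : ℝ) * δ₁ + (k₃ : ℝ) * δ₃ ≠ 0 ∧
      1 / |(k₁ : ℝ) * δ₁ + (k₃ : ℝ) * δ₃| ≤ C₀ * (min |(k₁ : ℝ)| |(k₃ : ℝ)|) ^ γ₀) :
    ∃ C' > (0 : ℝ), ∀ k ℓ : ℤ, ℓ ≠ 0 → ℓ ≠ k →
      |((k - ℓ : ℤ) : ℝ) * (ℓ : ℝ) / (((k - ℓ : ℤ) : ℝ) * δ₁ + (ℓ : ℝ) * δ₃)| ≤
        C' * |(ℓ : ℝ)| ^ (γ₀ + 2) := by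
  refine ⟨2 * max 1 (C₀ * |δ₃|) / |δ₁|, by positivity, fun k ℓ hℓ hℓk => ?_⟩
  have hℓ₁ : (1 : ℝ) ≤ |(ℓ : ℝ)| := by exact_mod_cast Int.one_le_abs hℓ
  have hℓ₀ : |(ℓ : ℝ)| ≠ 0 := by positivity
  have hdiv : 1 / |((k - ℓ : ℤ) : ℝ) * δ₁ + (ℓ : ℝ) * δ₃| ≤ C₀ * |(ℓ : ℝ)| ^ γ₀ :=
    (h (k - ℓ) ℓ (sub_ne_zero.2 hℓk.symm) hℓ).2.trans (by gcongr; exact min_le_right _ _)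
  calc _ ≤ 2 * max 1 (|(ℓ : ℝ)| * |δ₃| * (C₀ * |(ℓ : ℝ)| ^ γ₀)) * |(ℓ : ℝ)| / |δ₁| :=
        abs_mul_div_linear_le hδ₁ hdiv
    _ = 2 * max 1 (C₀ * |δ₃| * |(ℓ : ℝ)| ^ (γ₀ + 1)) * |(ℓ : ℝ)| / |δ₁| := by
        rw [Real.rpow_add_one hℓ₀]; ring_nf
    _ ≤ 2 * (max 1 (C₀ * |δ₃|) * |(ℓ : ℝ)| ^ (γ₀ + 1)) * |(ℓ : ℝ)| / |δ₁| := by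
        gcongr; exact max_one_mul_le (Real.one_le_rpow hℓ₁ (by linarith))
    _ = 2 * max 1 (C₀ * |δ₃|) / |δ₁| * |(ℓ : ℝ)| ^ (γ₀ + 2) := by
        rw [show γ₀ + 2 = γ₀ + 1 + 1 by ring, Real.rpow_add_one hℓ₀ (γ₀ + 1)]; ring

theorem stmt2 (δ₁ δ₃ : ℝ) (hδ₁ : δ₁ ≠ 0) (hδ₃ : δ₃ = 1 + δ₁) (hδ₃' : δ₃ ≠ 0)
    (C₀ γ₀ : ℝ) (hC₀ : 0 < C₀) (hγ₀ : 0 ≤ γ₀)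
    (h : ∀ k₁ k₃ : ℤ, k₁ ≠ 0 → k₃ ≠ 0 →
      (k₁ : ℝ) * δ₁ + (k₃ : ℝ) * δ₃ ≠ 0 ∧
      1 / |(k₁ : ℝ) * δ₁ + (k₃ : ℝ) * δ₃| ≤ C₀ * (min |(k₁ : ℝ)| |(k₃ : ℝ)|) ^ γ₀) :
    ∃ C' > (0 : ℝ), ∀ k ℓ : ℤ, ℓ ≠ 0 → ℓ ≠ k →
      |((k - ℓ : ℤ) : ℝ) * (ℓ : ℝ) / (((k - ℓ : ℤ) : ℝ) * δ₁ + (ℓ : ℝ) * δ₃)| ≤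
        C' * |(ℓ : ℝ)| ^ (γ₀ + 2) :=
  stmt2_general δ₁ δ₃ hδ₁ C₀ γ₀ hC₀ hγ₀ h
end

section
/- (L² continuity of the wavetrain bilinear multiplier, Fourier-coefficient formulation.) Let d ≥ 1 be an integer and assume the small divisor hypothesis. Let (u_k)_{k∈ℤ} and (v_k)_{k∈ℤ} be families of measurable functions from ℝ^{d−1} to ℂ with S := ess sup_{y∈ℝ^{d−1}} Σ_{k∈ℤ} (1+k²)^{γ₀+1} |u_k(y)|² < ∞ and V² := ∫_{ℝ^{d−1}} Σ_{k∈ℤ} |v_k(y)|² dy < ∞. Then there exists a constant C > 0, depending only on γ₀ and C₀, such that for almost every y the series Σ_{k₁+k₃=k, k₁·k₃≠0} u_{k₁}(y) v_{k₃}(y)/(k₁δ₁ + k₃δ₃) converges absolutely for every k ∈ ℤ, and ∫_{ℝ^{d−1}} Σ_{k∈ℤ} | Σ_{k₁+k₃=k, k₁·k₃≠0} u_{k₁}(y) v_{k₃}(y)/(k₁δ₁ + k₃δ₃) |² dy ≤ C · S · V². -/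
/-!
Write `⟨j⟩ = √(1 + j²)`. By the small divisor bound, the `k₁`-th summand of the `k`-th
coefficient is at most `(C₀ / ⟨k₁⟩) · ⟨k₁⟩ ^ (γ₀ + 1) |u k₁| · |v (k - k₁)|`. Cauchy–Schwarz in
`k₁`, then summation in `k` (a discrete Young inequality for convolution with `C₀² / ⟨k₁⟩²`),
bounds `∑ₖ |coefficient|²` pointwise in `y` by
`C₀² (∑ⱼ 1 / (1 + j²)) · ∑ⱼ ⟨j⟩ ^ (2γ₀ + 2) |u j|² · ∑ₖ |v k|²`; integrating in `y` gives the claim.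
All estimates are carried out in `ℝ≥0∞`, so no summability has to be checked along the way.
-/

open MeasureTheory
open scoped ENNReal

namespace ENNReal

variable {ι G : Type*}

theorem tsum_mul_sq_le (f g : ι → ℝ≥0∞) :
    (∑' i, f i * g i) ^ 2 ≤ (∑' i, f i ^ 2) * ∑' i, g i ^ 2 := by
  have hsqrt : ∑' i, f i * g i ≤
      (∑' i, f i ^ (2 : ℝ)) ^ (1 / 2 : ℝ) * (∑' i, g i ^ (2 : ℝ)) ^ (1 / 2 : ℝ) := by
    rw [ENNReal.tsum_eq_iSup_sum]
    refine iSup_le fun s => (inner_le_Lp_mul_Lq s f g .two_two).trans ?_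
    gcongr <;> exact ENNReal.sum_le_tsum s
  calc (∑' i, f i * g i) ^ 2
      ≤ ((∑' i, f i ^ (2 : ℝ)) ^ (1 / 2 : ℝ) * (∑' i, g i ^ (2 : ℝ)) ^ (1 / 2 : ℝ)) ^ 2 := by
        gcongr
    _ = (∑' i, f i ^ 2) * ∑' i, g i ^ 2 := by
        simp only [mul_pow, ← ENNReal.rpow_natCast, ← ENNReal.rpow_mul]
        norm_num

theorem tsum_sq_tsum_mul_sub_le [AddGroup G] (c f g : G → ℝ≥0∞) :
    ∑' k, (∑' j, c j * f j * g (k - j)) ^ 2 ≤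
      (∑' j, c j ^ 2) * (∑' j, f j ^ 2) * ∑' k, g k ^ 2 := by
  calc ∑' k, (∑' j, c j * f j * g (k - j)) ^ 2
      = ∑' k, (∑' j, f j * (c j * g (k - j))) ^ 2 := by simp only [mul_comm (c _), mul_assoc]
    _ ≤ ∑' k, (∑' j, f j ^ 2) * ∑' j, c j ^ 2 * g (k - j) ^ 2 :=
        ENNReal.tsum_le_tsum fun k => (tsum_mul_sq_le _ _).trans_eq (by simp only [mul_pow])
    _ = (∑' j, f j ^ 2) * ∑' j, c j ^ 2 * ∑' k, g (k - j) ^ 2 := by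
        rw [ENNReal.tsum_mul_left, ENNReal.tsum_comm]
        simp only [ENNReal.tsum_mul_left]
    _ = (∑' j, c j ^ 2) * (∑' j, f j ^ 2) * ∑' k, g k ^ 2 := by
        have hshift (j : G) : ∑' k, g (k - j) ^ 2 = ∑' k, g k ^ 2 :=
          (Equiv.subRight j).tsum_eq fun k => g k ^ 2
        simp only [hshift]
        rw [ENNReal.tsum_mul_right]
        ring

end ENNReal

theorem summable_one_div_one_add_sq_int : Summable fun j : ℤ => 1 / (1 + (j : ℝ) ^ 2) := by
  refine (Real.summable_one_div_int_pow.mpr one_lt_two).of_norm_bounded_eventually ?_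
  filter_upwards [Filter.eventually_cofinite_ne 0] with j hj
  rw [Real.norm_of_nonneg (by positivity)]
  have : (j : ℝ) ≠ 0 := by exact_mod_cast hj
  have : (0 : ℝ) < (j : ℝ) ^ 2 := by positivity
  gcongr
  linarith

def SmallDivisorBound (δ₁ δ₃ C₀ γ₀ : ℝ) : Prop :=
  ∀ k₁ k₃ : ℤ, k₁ ≠ 0 → k₃ ≠ 0 →
    1 / |(k₁ : ℝ) * δ₁ + (k₃ : ℝ) * δ₃| ≤ C₀ * (min |(k₁ : ℝ)| |(k₃ : ℝ)|) ^ γ₀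

-- `k₃ = k - k₁`, so the paper's constraint `k₁ k₃ ≠ 0` reads `k₁ ≠ 0 ∧ k₁ ≠ k`.
noncomputable def wavetrainSummand (δ₁ δ₃ : ℝ) (a b : ℤ → ℂ) (k k₁ : ℤ) : ℂ :=
  if k₁ ≠ 0 ∧ k₁ ≠ k then
    a k₁ * b (k - k₁) / ((((k₁ : ℝ) * δ₁ + ((k - k₁ : ℤ) : ℝ) * δ₃ : ℝ)) : ℂ)
  else 0

theorem min_abs_rpow_le_sqrt_one_add_sq_rpow {x y γ : ℝ} (hγ : 0 ≤ γ) :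
    min |x| |y| ^ γ ≤ √(1 + x ^ 2) ^ γ := by
  gcongr
  calc min |x| |y| ≤ |x| := min_le_left _ _
      _ = √(x ^ 2) := (Real.sqrt_sq_eq_abs x).symm
      _ ≤ √(1 + x ^ 2) := Real.sqrt_le_sqrt (by linarith)

theorem enorm_wavetrainSummand_le {δ₁ δ₃ C₀ γ₀ : ℝ} (hC₀ : 0 ≤ C₀) (hγ₀ : 0 ≤ γ₀)
    (hsd : SmallDivisorBound δ₁ δ₃ C₀ γ₀) (a b : ℤ → ℂ) (k k₁ : ℤ) :
    ‖wavetrainSummand δ₁ δ₃ a b k k₁‖ₑ ≤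
      ENNReal.ofReal (C₀ / √(1 + (k₁ : ℝ) ^ 2)) *
        (ENNReal.ofReal (√(1 + (k₁ : ℝ) ^ 2) ^ (γ₀ + 1)) * ‖a k₁‖ₑ) * ‖b (k - k₁)‖ₑ := by
  unfold wavetrainSummand
  split_ifs with hk
  · set r := √(1 + (k₁ : ℝ) ^ 2)
    have hr : 0 < r := by positivity
    have hdiv := (hsd k₁ (k - k₁) hk.1 (sub_ne_zero.mpr hk.2.symm)).trans
      (mul_le_mul_of_nonneg_left (min_abs_rpow_le_sqrt_one_add_sq_rpow hγ₀) hC₀)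
    simp only [← ofReal_norm]
    rw [← ENNReal.ofReal_mul (by positivity), ← ENNReal.ofReal_mul (by positivity),
      ← ENNReal.ofReal_mul (by positivity)]
    refine ENNReal.ofReal_le_ofReal ?_
    rw [norm_div, norm_mul, Complex.norm_real, Real.norm_eq_abs, Real.rpow_add_one hr.ne']
    calc ‖a k₁‖ * ‖b (k - k₁)‖ / |(k₁ : ℝ) * δ₁ + ((k - k₁ : ℤ) : ℝ) * δ₃|
        = ‖a k₁‖ * ‖b (k - k₁)‖ * (1 / |(k₁ : ℝ) * δ₁ + ((k - k₁ : ℤ) : ℝ) * δ₃|) := by ring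
      _ ≤ ‖a k₁‖ * ‖b (k - k₁)‖ * (C₀ * r ^ γ₀) := by gcongr
      _ = C₀ / r * (r ^ γ₀ * r * ‖a k₁‖) * ‖b (k - k₁)‖ := by field_simp
  · simp

theorem tsum_sq_tsum_enorm_wavetrainSummand_le {δ₁ δ₃ C₀ γ₀ : ℝ} (hC₀ : 0 ≤ C₀)
    (hγ₀ : 0 ≤ γ₀) (hsd : SmallDivisorBound δ₁ δ₃ C₀ γ₀) (a b : ℤ → ℂ) :
    ∑' k, (∑' k₁, ‖wavetrainSummand δ₁ δ₃ a b k k₁‖ₑ) ^ 2 ≤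
      ENNReal.ofReal (C₀ ^ 2 * ∑' j : ℤ, 1 / (1 + (j : ℝ) ^ 2)) *
        (∑' j : ℤ, ENNReal.ofReal ((1 + (j : ℝ) ^ 2) ^ (γ₀ + 1)) * ‖a j‖ₑ ^ 2) *
        ∑' k, ‖b k‖ₑ ^ 2 := by
  have hc (j : ℤ) : ENNReal.ofReal (C₀ / √(1 + (j : ℝ) ^ 2)) ^ 2 =
      ENNReal.ofReal (C₀ ^ 2 * (1 / (1 + (j : ℝ) ^ 2))) := by
    rw [← ENNReal.ofReal_pow (by positivity), div_pow, Real.sq_sqrt (by positivity)]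
    ring_nf
  have hf (j : ℤ) : (ENNReal.ofReal (√(1 + (j : ℝ) ^ 2) ^ (γ₀ + 1)) * ‖a j‖ₑ) ^ 2 =
      ENNReal.ofReal ((1 + (j : ℝ) ^ 2) ^ (γ₀ + 1)) * ‖a j‖ₑ ^ 2 := by
    rw [mul_pow, ← ENNReal.ofReal_pow (by positivity), Real.rpow_pow_comm (by positivity),
      Real.sq_sqrt (by positivity)]
  calc ∑' k, (∑' k₁, ‖wavetrainSummand δ₁ δ₃ a b k k₁‖ₑ) ^ 2
      ≤ ∑' k, (∑' k₁ : ℤ, ENNReal.ofReal (C₀ / √(1 + (k₁ : ℝ) ^ 2)) *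
          (ENNReal.ofReal (√(1 + (k₁ : ℝ) ^ 2) ^ (γ₀ + 1)) * ‖a k₁‖ₑ) * ‖b (k - k₁)‖ₑ) ^ 2 := by
        gcongr with k k₁
        exact enorm_wavetrainSummand_le hC₀ hγ₀ hsd a b k k₁
    _ ≤ (∑' j : ℤ, ENNReal.ofReal (C₀ / √(1 + (j : ℝ) ^ 2)) ^ 2) *
          (∑' j : ℤ, (ENNReal.ofReal (√(1 + (j : ℝ) ^ 2) ^ (γ₀ + 1)) * ‖a j‖ₑ) ^ 2) *
          ∑' k, ‖b k‖ₑ ^ 2 :=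
        ENNReal.tsum_sq_tsum_mul_sub_le (fun j : ℤ => ENNReal.ofReal (C₀ / √(1 + (j : ℝ) ^ 2)))
          (fun j : ℤ => ENNReal.ofReal (√(1 + (j : ℝ) ^ 2) ^ (γ₀ + 1)) * ‖a j‖ₑ) fun k => ‖b k‖ₑ
    _ = _ := by
        simp only [hc, hf]
        rw [← ENNReal.ofReal_tsum_of_nonneg (fun j => by positivity)
          (summable_one_div_one_add_sq_int.mul_left _), tsum_mul_left]

section MeasureSpace

variable {X : Type*} [MeasurableSpace X] {μ : Measure X} {δ₁ δ₃ C₀ γ₀ : ℝ}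

theorem ae_summable_norm_wavetrainSummand (hC₀ : 0 ≤ C₀) (hγ₀ : 0 ≤ γ₀)
    (hsd : SmallDivisorBound δ₁ δ₃ C₀ γ₀) (u v : ℤ → X → ℂ) (hv : ∀ k, Measurable (v k))
    (hu : ∀ᵐ y ∂μ, ∑' j : ℤ, ENNReal.ofReal ((1 + (j : ℝ) ^ 2) ^ (γ₀ + 1)) * ‖u j y‖ₑ ^ 2 ≠ ∞)
    (hv_int : ∫⁻ y, ∑' k, ‖v k y‖ₑ ^ 2 ∂μ ≠ ∞) :
    ∀ᵐ y ∂μ, ∀ k, Summable fun k₁ => ‖wavetrainSummand δ₁ δ₃ (u · y) (v · y) k k₁‖ := by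
  have hv_fin : ∀ᵐ y ∂μ, ∑' k, ‖v k y‖ₑ ^ 2 ≠ ∞ :=
    (ae_lt_top (by fun_prop) hv_int).mono fun _ => ne_of_lt
  filter_upwards [hu, hv_fin] with y huy hvy k
  have hsq := (ENNReal.le_tsum k).trans
    (tsum_sq_tsum_enorm_wavetrainSummand_le hC₀ hγ₀ hsd (u · y) (v · y))
  have hfin := ne_top_of_le_ne_top
    (ENNReal.mul_ne_top (ENNReal.mul_ne_top ENNReal.ofReal_ne_top huy) hvy) hsq
  exact tsum_enorm_ne_top_iff_summable_norm.mp (by simpa using hfin)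

theorem lintegral_tsum_enorm_tsum_wavetrainSummand_sq_le (hC₀ : 0 ≤ C₀) (hγ₀ : 0 ≤ γ₀)
    (hsd : SmallDivisorBound δ₁ δ₃ C₀ γ₀) (u v : ℤ → X → ℂ) (hv : ∀ k, Measurable (v k))
    {A : ℝ≥0∞}
    (hu : ∀ᵐ y ∂μ, ∑' j : ℤ, ENNReal.ofReal ((1 + (j : ℝ) ^ 2) ^ (γ₀ + 1)) * ‖u j y‖ₑ ^ 2 ≤ A) :
    ∫⁻ y, ∑' k, ‖∑' k₁, wavetrainSummand δ₁ δ₃ (u · y) (v · y) k k₁‖ₑ ^ 2 ∂μ ≤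
      ENNReal.ofReal (C₀ ^ 2 * ∑' j : ℤ, 1 / (1 + (j : ℝ) ^ 2)) * A *
        ∫⁻ y, ∑' k, ‖v k y‖ₑ ^ 2 ∂μ := by
  rw [← lintegral_const_mul _ (by fun_prop)]
  refine lintegral_mono_ae (hu.mono fun y huy => ?_)
  calc ∑' k, ‖∑' k₁, wavetrainSummand δ₁ δ₃ (u · y) (v · y) k k₁‖ₑ ^ 2
      ≤ ∑' k, (∑' k₁, ‖wavetrainSummand δ₁ δ₃ (u · y) (v · y) k k₁‖ₑ) ^ 2 := by
        gcongr
        exact enorm_tsum_le_tsum_enorm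
    _ ≤ _ := tsum_sq_tsum_enorm_wavetrainSummand_le hC₀ hγ₀ hsd (u · y) (v · y)
    _ ≤ _ := by gcongr

end MeasureSpace

theorem stmt4_general (d : ℕ)
    (δ₁ δ₃ : ℝ)
    (C₀ γ₀ : ℝ) (hC₀ : 0 < C₀) (hγ₀ : 0 ≤ γ₀)
    (hsd : ∀ k₁ k₃ : ℤ, k₁ ≠ 0 → k₃ ≠ 0 →
      (k₁ : ℝ) * δ₁ + (k₃ : ℝ) * δ₃ ≠ 0 ∧
      1 / |(k₁ : ℝ) * δ₁ + (k₃ : ℝ) * δ₃| ≤ C₀ * (min |(k₁ : ℝ)| |(k₃ : ℝ)|) ^ γ₀) :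
    ∃ C > (0 : ℝ),
      ∀ u v : ℤ → EuclideanSpace ℝ (Fin (d - 1)) → ℂ,
        (∀ k, Measurable (u k)) → (∀ k, Measurable (v k)) →
        ∀ S V : ℝ, 0 ≤ S → 0 ≤ V →
        (∀ᵐ y : EuclideanSpace ℝ (Fin (d - 1)) ∂volume,
          (∑' k : ℤ, ENNReal.ofReal ((1 + (k : ℝ) ^ 2) ^ (γ₀ + 1)) * (‖u k y‖₊ : ℝ≥0∞) ^ 2) ≤
            ENNReal.ofReal S) →
        ((∫⁻ y, ∑' k : ℤ, (‖v k y‖₊ : ℝ≥0∞) ^ 2 ∂volume) ≤ ENNReal.ofReal (V ^ 2)) →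
        (∀ᵐ y : EuclideanSpace ℝ (Fin (d - 1)) ∂volume, ∀ k : ℤ,
          Summable (fun k₁ : ℤ =>
            ‖(if k₁ ≠ 0 ∧ k₁ ≠ k then
                u k₁ y * v (k - k₁) y /
                  ((((k₁ : ℝ) * δ₁ + ((k - k₁ : ℤ) : ℝ) * δ₃ : ℝ)) : ℂ)
              else 0)‖)) ∧
        (∫⁻ y, ∑' k : ℤ,
            (‖∑' k₁ : ℤ,
                (if k₁ ≠ 0 ∧ k₁ ≠ k then
                  u k₁ y * v (k - k₁) y /
                    ((((k₁ : ℝ) * δ₁ + ((k - k₁ : ℤ) : ℝ) * δ₃ : ℝ)) : ℂ)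
                else 0)‖₊ : ℝ≥0∞) ^ 2 ∂volume) ≤
          ENNReal.ofReal (C * S * V ^ 2) := by
  have hsd' : SmallDivisorBound δ₁ δ₃ C₀ γ₀ := fun k₁ k₃ h₁ h₃ => (hsd k₁ k₃ h₁ h₃).2
  have hK : 0 < ∑' j : ℤ, 1 / (1 + (j : ℝ) ^ 2) :=
    summable_one_div_one_add_sq_int.tsum_pos (fun j => by positivity) 0 (by norm_num)
  refine ⟨C₀ ^ 2 * ∑' j : ℤ, 1 / (1 + (j : ℝ) ^ 2), by positivity,
    fun u v _ hv S V hS _ hu hv_int => ⟨?_, ?_⟩⟩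
  · exact ae_summable_norm_wavetrainSummand hC₀.le hγ₀ hsd' u v hv
      (hu.mono fun _ h => ne_top_of_le_ne_top ENNReal.ofReal_ne_top h)
      (ne_top_of_le_ne_top ENNReal.ofReal_ne_top hv_int)
  · calc _ ≤ _ := lintegral_tsum_enorm_tsum_wavetrainSummand_sq_le hC₀.le hγ₀ hsd' u v hv hu
      _ ≤ ENNReal.ofReal (C₀ ^ 2 * ∑' j : ℤ, 1 / (1 + (j : ℝ) ^ 2)) * ENNReal.ofReal S *
            ENNReal.ofReal (V ^ 2) := by gcongr; exact hv_int
      _ = _ := by rw [← ENNReal.ofReal_mul (by positivity), ← ENNReal.ofReal_mul (by positivity)]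

theorem stmt4 (d : ℕ) (hd : 1 ≤ d)
    (δ₁ δ₃ : ℝ) (hδ₁ : δ₁ ≠ 0) (hδ₃ : δ₃ = 1 + δ₁) (hδ₃' : δ₃ ≠ 0)
    (C₀ γ₀ : ℝ) (hC₀ : 0 < C₀) (hγ₀ : 0 ≤ γ₀)
    (hsd : ∀ k₁ k₃ : ℤ, k₁ ≠ 0 → k₃ ≠ 0 →
      (k₁ : ℝ) * δ₁ + (k₃ : ℝ) * δ₃ ≠ 0 ∧
      1 / |(k₁ : ℝ) * δ₁ + (k₃ : ℝ) * δ₃| ≤ C₀ * (min |(k₁ : ℝ)| |(k₃ : ℝ)|) ^ γ₀) :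
    ∃ C > (0 : ℝ),
      ∀ u v : ℤ → EuclideanSpace ℝ (Fin (d - 1)) → ℂ,
        (∀ k, Measurable (u k)) → (∀ k, Measurable (v k)) →
        ∀ S V : ℝ, 0 ≤ S → 0 ≤ V →
        (∀ᵐ y : EuclideanSpace ℝ (Fin (d - 1)) ∂volume,
          (∑' k : ℤ, ENNReal.ofReal ((1 + (k : ℝ) ^ 2) ^ (γ₀ + 1)) * (‖u k y‖₊ : ℝ≥0∞) ^ 2) ≤
            ENNReal.ofReal S) →
        ((∫⁻ y, ∑' k : ℤ, (‖v k y‖₊ : ℝ≥0∞) ^ 2 ∂volume) ≤ ENNReal.ofReal (V ^ 2)) →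
        (∀ᵐ y : EuclideanSpace ℝ (Fin (d - 1)) ∂volume, ∀ k : ℤ,
          Summable (fun k₁ : ℤ =>
            ‖(if k₁ ≠ 0 ∧ k₁ ≠ k then
                u k₁ y * v (k - k₁) y /
                  ((((k₁ : ℝ) * δ₁ + ((k - k₁ : ℤ) : ℝ) * δ₃ : ℝ)) : ℂ)
              else 0)‖)) ∧
        (∫⁻ y, ∑' k : ℤ,
            (‖∑' k₁ : ℤ,
                (if k₁ ≠ 0 ∧ k₁ ≠ k then
                  u k₁ y * v (k - k₁) y /
                    ((((k₁ : ℝ) * δ₁ + ((k - k₁ : ℤ) : ℝ) * δ₃ : ℝ)) : ℂ)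
                else 0)‖₊ : ℝ≥0∞) ^ 2 ∂volume) ≤
          ENNReal.ofReal (C * S * V ^ 2) :=
  stmt4_general d δ₁ δ₃ C₀ γ₀ hC₀ hγ₀ hsd
end

section
/- Let ω_i, ω_ℓ, ω_m be mutually distinct real numbers, let N ≥ 2 be a real number, and let σ, τ : ℝ → ℂ be continuous with |σ(θ)| ≤ C₁ · ⟨θ⟩^{−N} and |τ(θ)| ≤ C₁ · ⟨θ⟩^{−N} for all θ ∈ ℝ. Then there exists a constant C₂ > 0, depending only on C₁, N and the ω's, such that for all θ₀ ∈ ℝ and all ξ_d ≥ 0: ∫_{ξ_d}^{+∞} |σ(θ₀ + ω_i ξ_d + (ω_ℓ − ω_i)s) · τ(θ₀ + ω_i ξ_d + (ω_m − ω_i)s)| ds ≤ C₂ · ⟨ξ_d⟩^{−N+1}. -/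
/-!
Along the integration ray the two arguments `x = b + p s` and `y = b + q s` differ by
`(p - q) s`, so Peetre's inequality `⟨x - y⟩ ≤ √2 ⟨x⟩ ⟨y⟩` gives `⟨x⟩ ⟨y⟩ ≳ 1 + s`, with a
constant depending only on `|ωℓ - ωm|`. The integrand is therefore `O((1 + s)^(-N))`, and
`∫_ξ^∞ (1 + s)^(-N) ds = (1 + ξ)^(1-N) / (N - 1) ≤ ⟨ξ⟩^(1-N) / (N - 1)`.
-/

open MeasureTheory Set Filter
open scoped ENNReal Topology

theorem one_add_sq_sub_le (x y : ℝ) : 1 + (x - y) ^ 2 ≤ 2 * ((1 + x ^ 2) * (1 + y ^ 2)) := by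
  nlinarith [sq_nonneg (x + y), sq_nonneg (x * y)]

theorem sq_min_one_abs_mul_one_add_abs_le (c s : ℝ) :
    (min 1 |c| * (1 + |s|)) ^ 2 ≤ 2 * (1 + (c * s) ^ 2) := by
  have hm : 0 ≤ min 1 |c| := le_min zero_le_one (abs_nonneg c)
  have hm1 : min 1 |c| ≤ 1 := min_le_left _ _
  have hmc : min 1 |c| ≤ |c| := min_le_right _ _
  have hcs : (min 1 |c| * |s|) ^ 2 ≤ (c * s) ^ 2 := by
    rw [← sq_abs (c * s), abs_mul]
    gcongr
  nlinarith [sq_nonneg (min 1 |c| * (1 - |s|)), mul_le_mul hm1 hm1 hm zero_le_one]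

theorem min_one_abs_mul_one_add_abs_le {x y c s : ℝ} (h : x - y = c * s) :
    min 1 |c| * (1 + |s|) ≤ 2 * ((1 + x ^ 2) ^ (1 / 2 : ℝ) * (1 + y ^ 2) ^ (1 / 2 : ℝ)) := by
  rw [← Real.sqrt_eq_rpow, ← Real.sqrt_eq_rpow, ← Real.sqrt_mul (by positivity),
    show (2 : ℝ) = √(2 ^ 2) by simp, ← Real.sqrt_mul (by positivity),
    Real.le_sqrt (by positivity) (by positivity)]
  calc (min 1 |c| * (1 + |s|)) ^ 2 ≤ 2 * (1 + (x - y) ^ 2) := by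
        rw [h]; exact sq_min_one_abs_mul_one_add_abs_le c s
    _ ≤ 2 ^ 2 * ((1 + x ^ 2) * (1 + y ^ 2)) := by nlinarith [one_add_sq_sub_le x y]

theorem norm_mul_le_of_rpow_decay {E : Type*} [SeminormedRing E] {σ τ : ℝ → E} {C N : ℝ}
    (hN : 0 ≤ N) (hσ : ∀ θ : ℝ, ‖σ θ‖ ≤ C * ((1 + θ ^ 2) ^ (1 / 2 : ℝ)) ^ (-N))
    (hτ : ∀ θ : ℝ, ‖τ θ‖ ≤ C * ((1 + θ ^ 2) ^ (1 / 2 : ℝ)) ^ (-N))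
    {x y c s : ℝ} (hc : c ≠ 0) (h : x - y = c * s) :
    ‖σ x * τ y‖ ≤ C ^ 2 * (min 1 |c| / 2) ^ (-N) * (1 + |s|) ^ (-N) := by
  have hm : 0 < min 1 |c| / 2 := by have := abs_pos.mpr hc; positivity
  have hlower : min 1 |c| / 2 * (1 + |s|) ≤
      (1 + x ^ 2) ^ (1 / 2 : ℝ) * (1 + y ^ 2) ^ (1 / 2 : ℝ) := by
    linarith [min_one_abs_mul_one_add_abs_le h]
  calc ‖σ x * τ y‖ ≤ ‖σ x‖ * ‖τ y‖ := norm_mul_le _ _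
    _ ≤ (C * ((1 + x ^ 2) ^ (1 / 2 : ℝ)) ^ (-N)) * (C * ((1 + y ^ 2) ^ (1 / 2 : ℝ)) ^ (-N)) :=
        mul_le_mul (hσ x) (hτ y) (norm_nonneg _) ((norm_nonneg _).trans (hσ x))
    _ = C ^ 2 * ((1 + x ^ 2) ^ (1 / 2 : ℝ) * (1 + y ^ 2) ^ (1 / 2 : ℝ)) ^ (-N) := by
        rw [Real.mul_rpow (by positivity) (by positivity)]; ring
    _ ≤ C ^ 2 * (min 1 |c| / 2 * (1 + |s|)) ^ (-N) :=
        mul_le_mul_of_nonneg_left (Real.rpow_le_rpow_of_nonpos (by positivity) hlower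
          (neg_nonpos.mpr hN)) (sq_nonneg C)
    _ = C ^ 2 * (min 1 |c| / 2) ^ (-N) * (1 + |s|) ^ (-N) := by
        rw [Real.mul_rpow hm.le (by positivity), mul_assoc]

theorem lintegral_Ioi_one_add_rpow_neg {N a : ℝ} (hN : 1 < N) (ha : -1 < a) :
    ∫⁻ s in Ioi a, ENNReal.ofReal ((1 + s) ^ (-N)) =
      ENNReal.ofReal ((1 + a) ^ (1 - N) / (N - 1)) := by
  have hderiv : ∀ s ∈ Ici a,
      HasDerivAt (fun t ↦ -(1 + t) ^ (1 - N) / (N - 1)) ((1 + s) ^ (-N)) s := by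
    intro s hs
    refine ((((hasDerivAt_id' s).const_add 1).rpow_const (p := 1 - N)
      (Or.inl (by linarith [mem_Ici.mp hs]))).neg.div_const (N - 1)).congr_deriv ?_
    rw [show 1 - N - 1 = -N by ring]
    field_simp [show N - 1 ≠ 0 by linarith]
    ring
  have hpos : ∀ s ∈ Ioi a, 0 ≤ (1 + s) ^ (-N) :=
    fun s hs ↦ Real.rpow_nonneg (by linarith [mem_Ioi.mp hs]) _
  have hlim : Tendsto (fun t ↦ -(1 + t) ^ (1 - N) / (N - 1)) atTop (𝓝 0) := by
    have := ((tendsto_rpow_neg_atTop (by linarith : 0 < N - 1)).comp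
      (tendsto_atTop_add_const_left _ 1 tendsto_id)).neg.div_const (N - 1)
    simpa [Function.comp_def, neg_sub] using this
  rw [← ofReal_integral_eq_lintegral_ofReal (integrableOn_Ioi_deriv_of_nonneg' hderiv hpos hlim)
    ((ae_restrict_iff' measurableSet_Ioi).mpr (Eventually.of_forall hpos)),
    integral_Ioi_of_hasDerivAt_of_nonneg' hderiv hpos hlim, zero_sub, neg_div, neg_neg]

theorem one_add_rpow_le_one_add_sq_rpow_half_rpow {a r : ℝ} (ha : 0 ≤ a) (hr : r ≤ 0) :
    (1 + a) ^ r ≤ ((1 + a ^ 2) ^ (1 / 2 : ℝ)) ^ r := by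
  refine Real.rpow_le_rpow_of_nonpos (by positivity) ?_ hr
  rw [← Real.sqrt_eq_rpow, Real.sqrt_le_left (by positivity)]
  nlinarith

theorem lintegral_Ioi_nnnorm_mul_comp_le {E : Type*} [SeminormedRing E] {σ τ : ℝ → E} {C N : ℝ}
    (hN : 1 < N) (hσ : ∀ θ : ℝ, ‖σ θ‖ ≤ C * ((1 + θ ^ 2) ^ (1 / 2 : ℝ)) ^ (-N))
    (hτ : ∀ θ : ℝ, ‖τ θ‖ ≤ C * ((1 + θ ^ 2) ^ (1 / 2 : ℝ)) ^ (-N))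
    {p q : ℝ} (hpq : p ≠ q) (b : ℝ) {a : ℝ} (ha : 0 ≤ a) :
    ∫⁻ s in Ioi a, (‖σ (b + p * s) * τ (b + q * s)‖₊ : ℝ≥0∞) ≤
      ENNReal.ofReal (C ^ 2 * (min 1 |p - q| / 2) ^ (-N) * ((1 + a) ^ (1 - N) / (N - 1))) := by
  set K := C ^ 2 * (min 1 |p - q| / 2) ^ (-N)
  have hK : 0 ≤ K := by positivity
  have hpointwise : ∀ s ∈ Ioi a, (‖σ (b + p * s) * τ (b + q * s)‖₊ : ℝ≥0∞) ≤
      ENNReal.ofReal K * ENNReal.ofReal ((1 + s) ^ (-N)) := by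
    intro s hs
    have hs : |s| = s := abs_of_nonneg (ha.trans (le_of_lt hs))
    rw [← ENNReal.ofReal_mul hK, ← ENNReal.ofReal_coe_nnreal, coe_nnnorm]
    refine ENNReal.ofReal_le_ofReal ?_
    simpa only [hs] using
      norm_mul_le_of_rpow_decay (by linarith) hσ hτ (sub_ne_zero.mpr hpq)
        (show b + p * s - (b + q * s) = (p - q) * s by ring)
  calc ∫⁻ s in Ioi a, (‖σ (b + p * s) * τ (b + q * s)‖₊ : ℝ≥0∞)
      ≤ ∫⁻ s in Ioi a, ENNReal.ofReal K * ENNReal.ofReal ((1 + s) ^ (-N)) :=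
        setLIntegral_mono' measurableSet_Ioi hpointwise
    _ = ENNReal.ofReal (K * ((1 + a) ^ (1 - N) / (N - 1))) := by
        rw [lintegral_const_mul' _ _ ENNReal.ofReal_ne_top,
          lintegral_Ioi_one_add_rpow_neg hN (by linarith), ENNReal.ofReal_mul hK]

theorem stmt6_general (ωi ωl ωm : ℝ) (h3 : ωl ≠ ωm)
    (N : ℝ) (hN : 2 ≤ N) (C₁ : ℝ) :
    ∃ C₂ > (0 : ℝ), ∀ σ τ : ℝ → ℂ, Continuous σ → Continuous τ →
      (∀ θ : ℝ, ‖σ θ‖ ≤ C₁ * (((1 + θ ^ 2) ^ (1/2 : ℝ)) ^ (-N))) →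
      (∀ θ : ℝ, ‖τ θ‖ ≤ C₁ * (((1 + θ ^ 2) ^ (1/2 : ℝ)) ^ (-N))) →
      ∀ θ₀ ξd : ℝ, 0 ≤ ξd →
        (∫⁻ s in Set.Ioi ξd,
            (‖σ (θ₀ + ωi * ξd + (ωl - ωi) * s) * τ (θ₀ + ωi * ξd + (ωm - ωi) * s)‖₊ : ℝ≥0∞)) ≤
          ENNReal.ofReal (C₂ * (((1 + ξd ^ 2) ^ (1/2 : ℝ)) ^ (-N + 1))) := by
  have hN1 : 0 < N - 1 := by linarith
  have hm : 0 < min 1 |ωl - ωm| / 2 := by have := abs_pos.mpr (sub_ne_zero.mpr h3); positivity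
  refine ⟨(C₁ ^ 2 + 1) * (min 1 |ωl - ωm| / 2) ^ (-N) / (N - 1), by positivity, ?_⟩
  intro σ τ _ _ hσ hτ θ₀ ξd hξ
  have hbound := lintegral_Ioi_nnnorm_mul_comp_le (by linarith) hσ hτ
    (sub_left_injective.ne h3 : ωl - ωi ≠ ωm - ωi) (θ₀ + ωi * ξd) hξ
  rw [sub_sub_sub_cancel_right] at hbound
  refine hbound.trans (ENNReal.ofReal_le_ofReal ?_)
  rw [show -N + 1 = 1 - N by ring]
  calc C₁ ^ 2 * (min 1 |ωl - ωm| / 2) ^ (-N) * ((1 + ξd) ^ (1 - N) / (N - 1))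
      ≤ (C₁ ^ 2 + 1) * (min 1 |ωl - ωm| / 2) ^ (-N) *
          (((1 + ξd ^ 2) ^ (1 / 2 : ℝ)) ^ (1 - N) / (N - 1)) := by
        gcongr ?_ * _ * (?_ / _)
        · linarith
        · exact one_add_rpow_le_one_add_sq_rpow_half_rpow hξ (by linarith)
    _ = _ := by ring

theorem stmt6 (ωi ωl ωm : ℝ) (h1 : ωi ≠ ωl) (h2 : ωi ≠ ωm) (h3 : ωl ≠ ωm)
    (N : ℝ) (hN : 2 ≤ N) (C₁ : ℝ) :
    ∃ C₂ > (0 : ℝ), ∀ σ τ : ℝ → ℂ, Continuous σ → Continuous τ →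
      (∀ θ : ℝ, ‖σ θ‖ ≤ C₁ * (((1 + θ ^ 2) ^ (1/2 : ℝ)) ^ (-N))) →
      (∀ θ : ℝ, ‖τ θ‖ ≤ C₁ * (((1 + θ ^ 2) ^ (1/2 : ℝ)) ^ (-N))) →
      ∀ θ₀ ξd : ℝ, 0 ≤ ξd →
        (∫⁻ s in Set.Ioi ξd,
            (‖σ (θ₀ + ωi * ξd + (ωl - ωi) * s) * τ (θ₀ + ωi * ξd + (ωm - ωi) * s)‖₊ : ℝ≥0∞)) ≤
          ENNReal.ofReal (C₂ * (((1 + ξd ^ 2) ^ (1/2 : ℝ)) ^ (-N + 1))) :=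
  stmt6_general ωi ωl ωm h3 N hN C₁
end

section
/- Let d ≥ 1 be an integer and let u, v : ℝ^{d−1} × ℝ → ℂ be measurable with M² := ess sup_{y∈ℝ^{d−1}} ∫_ℝ (1 + θ²) |u(y,θ)|² dθ < ∞ and v ∈ L²(ℝ^d). Then for almost every (y,θ) ∈ ℝ^{d−1} × ℝ the integral 𝔽_pul(u,v)(y,θ) = ∫₀^{+∞} u(y, θ + δ₁X) · v(y, θ + δ₃X) dX converges absolutely, and ‖𝔽_pul(u,v)‖²_{L²(ℝ^d)} ≤ (π/|δ₁|) · M² · ‖v‖²_{L²(ℝ^d)}. -/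
/-!
Write `w s = 1 + s²`. For fixed `(y, θ)`, Cauchy–Schwarz with the weight `w (θ + δ₁ X)` bounds
`|𝔽_pul(u,v)(y,θ)|²` by `(M² / |δ₁|) · ∫_{X>0} |v(y, θ + δ₃ X)|² / w (θ + δ₁ X) dX`. Integrating
in `θ` and substituting `t = θ + δ₃ X`, the remaining kernel is `1 / w (t - X)` because
`δ₃ - δ₁ = 1`, and `∫ dX / (1 + X²) = π`. Absolute convergence almost everywhere follows from
the finiteness of the resulting bound.
-/

open MeasureTheory Set
open scoped ENNReal

namespace ENNReal

theorem lintegral_mul_sq_le {α : Type*} [MeasurableSpace α] (μ : Measure α) {f g : α → ℝ≥0∞}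
    (hf : AEMeasurable f μ) (hg : AEMeasurable g μ) :
    (∫⁻ x, f x * g x ∂μ) ^ 2 ≤ (∫⁻ x, f x ^ 2 ∂μ) * ∫⁻ x, g x ^ 2 ∂μ := by
  have h := lintegral_mul_le_Lp_mul_Lq μ .two_two hf hg
  simp only [ENNReal.rpow_two] at h
  calc (∫⁻ x, f x * g x ∂μ) ^ 2
      ≤ ((∫⁻ x, f x ^ 2 ∂μ) ^ (2⁻¹ : ℝ) * (∫⁻ x, g x ^ 2 ∂μ) ^ (2⁻¹ : ℝ)) ^ 2 := by
        simpa using pow_le_pow_left' h 2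
    _ = (∫⁻ x, f x ^ 2 ∂μ) * ∫⁻ x, g x ^ 2 ∂μ := by
        rw [mul_pow, ← ENNReal.rpow_mul_natCast, ← ENNReal.rpow_mul_natCast]
        norm_num

theorem lintegral_mul_sq_le_weighted {α : Type*} [MeasurableSpace α] (μ : Measure α)
    {f g w : α → ℝ≥0∞} (hf : AEMeasurable f μ) (hg : AEMeasurable g μ) (hw : AEMeasurable w μ)
    (hw0 : ∀ x, w x ≠ 0) (hwtop : ∀ x, w x ≠ ∞) :
    (∫⁻ x, f x * g x ∂μ) ^ 2 ≤ (∫⁻ x, w x * f x ^ 2 ∂μ) * ∫⁻ x, g x ^ 2 / w x ∂μ := by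
  set s : α → ℝ≥0∞ := fun x => w x ^ (2⁻¹ : ℝ)
  have hs : ∀ x, s x ^ 2 = w x := fun x => by
    rw [← ENNReal.rpow_mul_natCast]; norm_num
  have hs0 : ∀ x, s x ≠ 0 := fun x => by simp [s, hw0 x]
  have hstop : ∀ x, s x ≠ ∞ := fun x => by simp [s, hwtop x]
  have hsm : AEMeasurable s μ := hw.pow_const _
  calc (∫⁻ x, f x * g x ∂μ) ^ 2 = (∫⁻ x, (s x * f x) * (g x / s x) ∂μ) ^ 2 := by
        congr 2 with x
        rw [mul_comm (s x), mul_assoc, ENNReal.mul_div_cancel (hs0 x) (hstop x)]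
    _ ≤ (∫⁻ x, (s x * f x) ^ 2 ∂μ) * ∫⁻ x, (g x / s x) ^ 2 ∂μ :=
        lintegral_mul_sq_le μ (hsm.mul hf) (hg.div hsm)
    _ = (∫⁻ x, w x * f x ^ 2 ∂μ) * ∫⁻ x, g x ^ 2 / w x ∂μ := by
        simp only [div_eq_mul_inv, mul_pow, ← ENNReal.inv_pow, hs]

end ENNReal

theorem lintegral_comp_add_mul (f : ℝ → ℝ≥0∞) (b : ℝ) {a : ℝ} (ha : a ≠ 0) :
    ∫⁻ x, f (b + a * x) = ENNReal.ofReal |a|⁻¹ * ∫⁻ x, f x := by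
  rw [← abs_inv, ← lintegral_add_left_eq_self f b, ← smul_eq_mul, ← lintegral_smul_measure,
    ← Real.map_volume_mul_left ha, ← MeasurableEquiv.coe_mulLeft₀ ha, lintegral_map_equiv]
  rfl

theorem lintegral_inv_ofReal_one_add_sq :
    ∫⁻ x : ℝ, (ENNReal.ofReal (1 + x ^ 2))⁻¹ = ENNReal.ofReal Real.pi := by
  have h (x : ℝ) : (ENNReal.ofReal (1 + x ^ 2))⁻¹ = ENNReal.ofReal (1 + x ^ 2)⁻¹ :=
    (ENNReal.ofReal_inv_of_pos (by positivity)).symm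
  simp_rw [h]
  rw [← ofReal_integral_eq_lintegral_ofReal integrable_inv_one_add_sq
    (.of_forall fun x => by positivity), integral_univ_inv_one_add_sq]

theorem lintegral_lintegral_mul_shear {g k : ℝ → ℝ≥0∞} (hg : Measurable g) (hk : Measurable k)
    {a b : ℝ} (hab : a ≠ b) :
    ∫⁻ θ, ∫⁻ X, g (θ + a * X) * k (θ + b * X) =
      ENNReal.ofReal |b - a|⁻¹ * (∫⁻ x, g x) * ∫⁻ x, k x := by
  have hba : b - a ≠ 0 := sub_ne_zero.2 hab.symm
  calc ∫⁻ θ, ∫⁻ X, g (θ + a * X) * k (θ + b * X)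
      = ∫⁻ X, ∫⁻ θ, g (θ + a * X) * k (θ + a * X + (b - a) * X) := by
        rw [lintegral_lintegral_swap (by fun_prop)]
        congr! 6 with X θ
        ring
    _ = ∫⁻ X, ∫⁻ t, g t * k (t + (b - a) * X) := by
        congr 1 with X
        exact lintegral_add_right_eq_self (fun t => g t * k (t + (b - a) * X)) (a * X)
    _ = ∫⁻ t, g t * (ENNReal.ofReal |b - a|⁻¹ * ∫⁻ x, k x) := by
        rw [lintegral_lintegral_swap (by fun_prop)]
        congr 1 with t
        rw [lintegral_const_mul _ (by fun_prop), lintegral_comp_add_mul k t hba]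
    _ = ENNReal.ofReal |b - a|⁻¹ * (∫⁻ x, g x) * ∫⁻ x, k x := by
        rw [lintegral_mul_const _ hg]
        ring

theorem lintegral_sq_setLIntegral_Ioi_shear_le {f g : ℝ → ℝ≥0∞} (hf : Measurable f)
    (hg : Measurable g) {δ₁ δ₃ : ℝ} (hδ₁ : δ₁ ≠ 0) (hδ₃ : δ₃ = 1 + δ₁) :
    ∫⁻ θ, (∫⁻ X in Ioi 0, f (θ + δ₁ * X) * g (θ + δ₃ * X)) ^ 2 ≤
      ENNReal.ofReal (Real.pi / |δ₁|) * (∫⁻ θ, ENNReal.ofReal (1 + θ ^ 2) * f θ ^ 2) *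
        ∫⁻ θ, g θ ^ 2 := by
  set w : ℝ → ℝ≥0∞ := fun s => ENNReal.ofReal (1 + s ^ 2)
  have hw : Measurable w := by fun_prop
  set A := ∫⁻ θ, w θ * f θ ^ 2
  have hpoint (θ : ℝ) : (∫⁻ X in Ioi 0, f (θ + δ₁ * X) * g (θ + δ₃ * X)) ^ 2 ≤
      ENNReal.ofReal |δ₁|⁻¹ * A * ∫⁻ X, g (θ + δ₃ * X) ^ 2 * (w (θ + δ₁ * X))⁻¹ := by
    calc (∫⁻ X in Ioi 0, f (θ + δ₁ * X) * g (θ + δ₃ * X)) ^ 2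
        ≤ (∫⁻ X in Ioi 0, w (θ + δ₁ * X) * f (θ + δ₁ * X) ^ 2) *
            ∫⁻ X in Ioi 0, g (θ + δ₃ * X) ^ 2 / w (θ + δ₁ * X) :=
          ENNReal.lintegral_mul_sq_le_weighted _ (by fun_prop) (by fun_prop) (by fun_prop)
            (fun _ => (ENNReal.ofReal_pos.2 (by positivity)).ne') (fun _ => ENNReal.ofReal_ne_top)
      _ ≤ (∫⁻ X, w (θ + δ₁ * X) * f (θ + δ₁ * X) ^ 2) *
            ∫⁻ X, g (θ + δ₃ * X) ^ 2 * (w (θ + δ₁ * X))⁻¹ := by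
          simp only [div_eq_mul_inv]
          gcongr <;> exact Measure.restrict_le_self
      _ = ENNReal.ofReal |δ₁|⁻¹ * A * ∫⁻ X, g (θ + δ₃ * X) ^ 2 * (w (θ + δ₁ * X))⁻¹ := by
          rw [lintegral_comp_add_mul (fun s => w s * f s ^ 2) θ hδ₁]
  have hδ : |δ₁ - δ₃|⁻¹ = 1 := by simp [hδ₃]
  calc ∫⁻ θ, (∫⁻ X in Ioi 0, f (θ + δ₁ * X) * g (θ + δ₃ * X)) ^ 2
      ≤ ∫⁻ θ, ENNReal.ofReal |δ₁|⁻¹ * A * ∫⁻ X, g (θ + δ₃ * X) ^ 2 * (w (θ + δ₁ * X))⁻¹ :=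
        lintegral_mono hpoint
    _ = ENNReal.ofReal |δ₁|⁻¹ * A * ((∫⁻ θ, g θ ^ 2) * ∫⁻ s, (w s)⁻¹) := by
        rw [lintegral_const_mul _ (by fun_prop),
          lintegral_lintegral_mul_shear (g := fun s => g s ^ 2) (k := fun s => (w s)⁻¹)
            (by fun_prop) hw.inv (by linarith), hδ,
          ENNReal.ofReal_one, one_mul]
    _ = ENNReal.ofReal (Real.pi / |δ₁|) * A * ∫⁻ θ, g θ ^ 2 := by
        rw [lintegral_inv_ofReal_one_add_sq, div_eq_inv_mul,
          ENNReal.ofReal_mul (by positivity)]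
        ring

theorem lintegral_prod_sq_setLIntegral_Ioi_shear_le {Y : Type*} [MeasurableSpace Y]
    (μ : Measure Y) [SFinite μ] {f g : Y × ℝ → ℝ≥0∞} (hf : Measurable f) (hg : Measurable g)
    {δ₁ δ₃ : ℝ} (hδ₁ : δ₁ ≠ 0) (hδ₃ : δ₃ = 1 + δ₁) {C : ℝ≥0∞}
    (hC : ∀ᵐ y ∂μ, ∫⁻ θ, ENNReal.ofReal (1 + θ ^ 2) * f (y, θ) ^ 2 ≤ C) :
    ∫⁻ p, (∫⁻ X in Ioi 0, f (p.1, p.2 + δ₁ * X) * g (p.1, p.2 + δ₃ * X)) ^ 2 ∂μ.prod volume ≤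
      ENNReal.ofReal (Real.pi / |δ₁|) * C * ∫⁻ p, g p ^ 2 ∂μ.prod volume := by
  calc ∫⁻ p, (∫⁻ X in Ioi 0, f (p.1, p.2 + δ₁ * X) * g (p.1, p.2 + δ₃ * X)) ^ 2 ∂μ.prod volume
      ≤ ∫⁻ y, (∫⁻ θ, (∫⁻ X in Ioi 0, f (y, θ + δ₁ * X) * g (y, θ + δ₃ * X)) ^ 2) ∂μ :=
        lintegral_prod_le _
    _ ≤ ∫⁻ y, ENNReal.ofReal (Real.pi / |δ₁|) * C * (∫⁻ θ, g (y, θ) ^ 2) ∂μ := by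
        refine lintegral_mono_ae ?_
        filter_upwards [hC] with y hy
        refine (lintegral_sq_setLIntegral_Ioi_shear_le (f := fun θ => f (y, θ))
          (g := fun θ => g (y, θ)) (by fun_prop) (by fun_prop) hδ₁ hδ₃).trans ?_
        gcongr
    _ = ENNReal.ofReal (Real.pi / |δ₁|) * C * ∫⁻ p, g p ^ 2 ∂μ.prod volume := by
        rw [lintegral_const_mul _ (by fun_prop), lintegral_prod _ (by fun_prop)]

theorem stmt8_general (d : ℕ)
    (δ₁ δ₃ : ℝ) (hδ₁ : δ₁ ≠ 0) (hδ₃ : δ₃ = 1 + δ₁)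
    (u v : EuclideanSpace ℝ (Fin (d - 1)) × ℝ → ℂ)
    (hu : Measurable u) (hv : Measurable v)
    (M : ℝ)
    (huM : ∀ᵐ y : EuclideanSpace ℝ (Fin (d - 1)) ∂volume,
      (∫⁻ θ : ℝ, ENNReal.ofReal (1 + θ ^ 2) * (‖u (y, θ)‖₊ : ℝ≥0∞) ^ 2) ≤
        ENNReal.ofReal (M ^ 2))
    (hvL2 : MemLp v 2 volume) :
    (∀ᵐ p : EuclideanSpace ℝ (Fin (d - 1)) × ℝ ∂volume,
      IntegrableOn (fun X => u (p.1, p.2 + δ₁ * X) * v (p.1, p.2 + δ₃ * X)) (Set.Ioi 0)) ∧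
    (∫⁻ p : EuclideanSpace ℝ (Fin (d - 1)) × ℝ,
        (‖∫ X in Set.Ioi (0 : ℝ), u (p.1, p.2 + δ₁ * X) * v (p.1, p.2 + δ₃ * X)‖₊ : ℝ≥0∞) ^ 2) ≤
      ENNReal.ofReal (Real.pi / |δ₁|) * ENNReal.ofReal (M ^ 2) *
        ∫⁻ p : EuclideanSpace ℝ (Fin (d - 1)) × ℝ, (‖v p‖₊ : ℝ≥0∞) ^ 2 := by
  simp only [← enorm_eq_nnnorm] at huM ⊢
  set G := fun p : EuclideanSpace ℝ (Fin (d - 1)) × ℝ =>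
    ∫⁻ X in Ioi 0, ‖u (p.1, p.2 + δ₁ * X)‖ₑ * ‖v (p.1, p.2 + δ₃ * X)‖ₑ
  have hG : Measurable G := by fun_prop
  have hbound : ∫⁻ p, G p ^ 2 ≤
      ENNReal.ofReal (Real.pi / |δ₁|) * ENNReal.ofReal (M ^ 2) * ∫⁻ p, ‖v p‖ₑ ^ 2 := by
    simpa only [Measure.volume_eq_prod] using lintegral_prod_sq_setLIntegral_Ioi_shear_le
      volume hu.enorm hv.enorm hδ₁ hδ₃ huM
  have hv2 : ∫⁻ p, ‖v p‖ₑ ^ 2 ≠ ∞ := by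
    simpa [ENNReal.rpow_two] using
      (lintegral_rpow_enorm_lt_top_of_eLpNorm_lt_top two_ne_zero ENNReal.ofNat_ne_top
        hvL2.eLpNorm_lt_top).ne
  have hG2 : ∫⁻ p, G p ^ 2 ≠ ∞ := ne_top_of_le_ne_top (by finiteness) hbound
  refine ⟨?_, le_trans (lintegral_mono fun p => ?_) hbound⟩
  · filter_upwards [ae_lt_top (hG.pow_const 2) hG2] with p hp
    refine ⟨by fun_prop, ?_⟩
    simpa [HasFiniteIntegral, G] using hp
  · gcongr
    simpa only [enorm_mul] using enorm_integral_le_lintegral_enorm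
      (fun X => u (p.1, p.2 + δ₁ * X) * v (p.1, p.2 + δ₃ * X))

theorem stmt8 (d : ℕ) (hd : 1 ≤ d)
    (δ₁ δ₃ : ℝ) (hδ₁ : δ₁ ≠ 0) (hδ₃ : δ₃ = 1 + δ₁) (hδ₃' : δ₃ ≠ 0)
    (u v : EuclideanSpace ℝ (Fin (d - 1)) × ℝ → ℂ)
    (hu : Measurable u) (hv : Measurable v)
    (M : ℝ) (hM : 0 ≤ M)
    (huM : ∀ᵐ y : EuclideanSpace ℝ (Fin (d - 1)) ∂volume,
      (∫⁻ θ : ℝ, ENNReal.ofReal (1 + θ ^ 2) * (‖u (y, θ)‖₊ : ℝ≥0∞) ^ 2) ≤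
        ENNReal.ofReal (M ^ 2))
    (hvL2 : MemLp v 2 volume) :
    (∀ᵐ p : EuclideanSpace ℝ (Fin (d - 1)) × ℝ ∂volume,
      IntegrableOn (fun X => u (p.1, p.2 + δ₁ * X) * v (p.1, p.2 + δ₃ * X)) (Set.Ioi 0)) ∧
    (∫⁻ p : EuclideanSpace ℝ (Fin (d - 1)) × ℝ,
        (‖∫ X in Set.Ioi (0 : ℝ), u (p.1, p.2 + δ₁ * X) * v (p.1, p.2 + δ₃ * X)‖₊ : ℝ≥0∞) ^ 2) ≤
      ENNReal.ofReal (Real.pi / |δ₁|) * ENNReal.ofReal (M ^ 2) *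
        ∫⁻ p : EuclideanSpace ℝ (Fin (d - 1)) × ℝ, (‖v p‖₊ : ℝ≥0∞) ^ 2 :=
  stmt8_general d δ₁ δ₃ hδ₁ hδ₃ u v hu hv M huM hvL2
end

section
/- (Integration by parts for the pulse bilinear operator.) For all Schwartz functions u, v ∈ 𝒮(ℝ) and all θ ∈ ℝ: 𝔽_pul(u, v')(θ) = −(1/δ₃) · u(θ) · v(θ) − (δ₁/δ₃) · 𝔽_pul(u', v)(θ), where ' denotes the derivative d/dθ. -/
/-!
Integrate by parts on `(0, ∞)` the product `X ↦ u (θ + δ₁ X) * v (θ + δ₃ X)`, whose derivative is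
`δ₁ u' v + δ₃ u v'`: it equals `u θ * v θ` at `0` and tends to `0` at `∞`. Since `δ₃ ≠ 0`, the factor
`v (θ + δ₃ X)` (resp. `v'`) is integrable and decays, while the other factor is merely bounded.
-/

open MeasureTheory Filter Set Topology

namespace SchwartzMap

section Affine

variable {F : Type*} [NormedAddCommGroup F] [NormedSpace ℝ F] (f : 𝓢(ℝ, F)) (θ : ℝ) {a : ℝ}

lemma integrable_comp_affine (ha : a ≠ 0) : Integrable (fun X : ℝ => f (θ + a * X)) :=
  (f.integrable.comp_add_left θ).comp_mul_left' ha

lemma tendsto_comp_affine_atTop (ha : a ≠ 0) :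
    Tendsto (fun X : ℝ => f (θ + a * X)) atTop (𝓝 0) := by
  have haffine : Tendsto (fun X : ℝ => θ + a * X) (cocompact ℝ) (cocompact ℝ) :=
    ((Homeomorph.mulLeft₀ a ha).trans (Homeomorph.addLeft θ)).map_cocompact.le
  exact f.toZeroAtInfty.zero_at_infty'.comp (haffine.mono_left atTop_le_cocompact)

lemma hasDerivAt_comp_affine (X : ℝ) :
    HasDerivAt (fun X : ℝ => f (θ + a * X)) (a • deriv f (θ + a * X)) X := by
  have haffine : HasDerivAt (fun X : ℝ => θ + a * X) a X := by
    simpa using ((hasDerivAt_id X).const_mul a).const_add θ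
  exact f.differentiableAt.hasDerivAt.scomp X haffine

end Affine

section Product

variable {A : Type*} [NormedRing A] [NormedAlgebra ℝ A] (u v : 𝓢(ℝ, A)) (θ : ℝ) {a b : ℝ}

lemma integrable_comp_affine_mul_comp_affine (hb : b ≠ 0) :
    Integrable (fun X : ℝ => u (θ + a * X) * v (θ + b * X)) :=
  (v.integrable_comp_affine θ hb).bdd_mul
    (u.continuous.comp (by fun_prop : Continuous fun X : ℝ => θ + a * X)).aestronglyMeasurable
    (.of_forall fun X => u.norm_le_seminorm ℝ (θ + a * X))

lemma tendsto_comp_affine_mul_comp_affine_atTop (hb : b ≠ 0) :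
    Tendsto (fun X : ℝ => u (θ + a * X) * v (θ + b * X)) atTop (𝓝 0) :=
  isBoundedUnder_le_mul_tendsto_zero
    (isBoundedUnder_of ⟨_, fun X => u.norm_le_seminorm ℝ (θ + a * X)⟩)
    (v.tendsto_comp_affine_atTop θ hb)

variable [CompleteSpace A]

theorem integral_Ioi_comp_affine_mul_deriv (hb : b ≠ 0) :
    b • ∫ X in Ioi (0 : ℝ), u (θ + a * X) * deriv v (θ + b * X) =
      -(u θ * v θ) - a • ∫ X in Ioi (0 : ℝ), deriv u (θ + a * X) * v (θ + b * X) := by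
  have hu'v : Integrable fun X : ℝ => deriv u (θ + a * X) * v (θ + b * X) := by
    simpa only [derivCLM_apply] using
      integrable_comp_affine_mul_comp_affine (derivCLM ℝ A u) v θ (a := a) hb
  have huv' : Integrable fun X : ℝ => u (θ + a * X) * deriv v (θ + b * X) := by
    simpa only [derivCLM_apply] using
      integrable_comp_affine_mul_comp_affine u (derivCLM ℝ A v) θ (a := a) hb
  have h_zero : Tendsto (fun X : ℝ => u (θ + a * X) * v (θ + b * X)) (𝓝[>] 0) (𝓝 (u θ * v θ)) := by
    have hcont : Continuous fun X : ℝ => u (θ + a * X) * v (θ + b * X) := by fun_prop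
    simpa using (hcont.tendsto 0).mono_left nhdsWithin_le_nhds
  have hibp := integral_Ioi_mul_deriv_eq_deriv_mul
    (fun X _ => u.hasDerivAt_comp_affine θ (a := a) X) (fun X _ => v.hasDerivAt_comp_affine θ X)
    ((huv'.smul b).integrableOn.congr_fun (fun X _ => (mul_smul_comm b _ _).symm) measurableSet_Ioi)
    ((hu'v.smul a).integrableOn.congr_fun (fun X _ => (smul_mul_assoc a _ _).symm) measurableSet_Ioi)
    h_zero (tendsto_comp_affine_mul_comp_affine_atTop u v θ hb)
  simpa only [mul_smul_comm, smul_mul_assoc, integral_smul, zero_sub] using hibp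

end Product

end SchwartzMap

theorem stmt11_general (δ₁ δ₃ : ℝ) (hδ₃' : δ₃ ≠ 0)
    (u v : SchwartzMap ℝ ℂ) (θ : ℝ) :
    (∫ X in Set.Ioi (0 : ℝ), u (θ + δ₁ * X) * deriv (⇑v) (θ + δ₃ * X)) =
      -(1 / (δ₃ : ℂ)) * (u θ * v θ) -
        ((δ₁ : ℂ) / (δ₃ : ℂ)) *
          ∫ X in Set.Ioi (0 : ℝ), deriv (⇑u) (θ + δ₁ * X) * v (θ + δ₃ * X) := by
  have hibp := SchwartzMap.integral_Ioi_comp_affine_mul_deriv u v θ (a := δ₁) hδ₃'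
  simp only [Complex.real_smul] at hibp
  have hδ₃c : (δ₃ : ℂ) ≠ 0 := by exact_mod_cast hδ₃'
  set I₁ := ∫ X in Ioi (0 : ℝ), deriv u (θ + δ₁ * X) * v (θ + δ₃ * X)
  set I₂ := ∫ X in Ioi (0 : ℝ), u (θ + δ₁ * X) * deriv v (θ + δ₃ * X)
  field_simp
  linear_combination hibp

theorem stmt11 (δ₁ δ₃ : ℝ) (hδ₁ : δ₁ ≠ 0) (hδ₃ : δ₃ = 1 + δ₁) (hδ₃' : δ₃ ≠ 0)
    (u v : SchwartzMap ℝ ℂ) (θ : ℝ) :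
    (∫ X in Set.Ioi (0 : ℝ), u (θ + δ₁ * X) * deriv (⇑v) (θ + δ₃ * X)) =
      -(1 / (δ₃ : ℂ)) * (u θ * v θ) -
        ((δ₁ : ℂ) / (δ₃ : ℂ)) *
          ∫ X in Set.Ioi (0 : ℝ), deriv (⇑u) (θ + δ₁ * X) * v (θ + δ₃ * X) :=
  stmt11_general δ₁ δ₃ hδ₃' u v θ
end

section
/- For all Schwartz functions u, v ∈ 𝒮(ℝ), the function θ ↦ 𝔽_pul(u,v)(θ) = ∫₀^{+∞} u(θ + δ₁X) · v(θ + δ₃X) dX is well defined for every θ ∈ ℝ and belongs to the Schwartz space 𝒮(ℝ). -/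
/-!
Put `a = θ + δ₁ X` and `b = θ + δ₃ X`. As `δ₁ ≠ δ₃`, both `θ` and `X` are linear combinations of
`a` and `b`, so `1 + |θ|` and `1 + |X|` are at most a constant times `(1 + |a|)(1 + |b|)`. The rapid
decay of `u` at `a` and of `v` at `b` then bounds `|θ|ᵏ` times the integrand by `Cₖ (1 + X²)⁻¹`,
which gives both the convergence of the integral and the rapid decay of `𝔽_pul(u, v)`.
Differentiating under the integral sign, `𝔽_pul(u, v)' = 𝔽_pul(u', v) + 𝔽_pul(u, v')`, so every
derivative of `𝔽_pul(u, v)` is a finite sum of such integrals of Schwartz functions and decays too.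
-/

open MeasureTheory SchwartzMap Set

lemma one_add_abs_add_mul_le (α β a b : ℝ) :
    1 + |α * a + β * b| ≤ (1 + |α| + |β|) * ((1 + |a|) * (1 + |b|)) := by
  have hα := abs_nonneg α; have hβ := abs_nonneg β; have ha := abs_nonneg a; have hb := abs_nonneg b
  calc 1 + |α * a + β * b| ≤ 1 + |α| * |a| + |β| * |b| := by
        grw [abs_add_le, abs_mul, abs_mul, add_assoc]
    _ ≤ _ := by nlinarith [mul_nonneg (mul_nonneg hα ha) hb, mul_nonneg (mul_nonneg hβ ha) hb,
        mul_nonneg ha hb, mul_nonneg hα hb, mul_nonneg hβ ha]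

lemma SchwartzMap.exists_one_add_norm_pow_mul_le {E F : Type*} [NormedAddCommGroup E]
    [NormedSpace ℝ E] [NormedAddCommGroup F] [NormedSpace ℝ F] (f : 𝓢(E, F)) (k : ℕ) :
    ∃ C, ∀ x, (1 + ‖x‖) ^ k * ‖f x‖ ≤ C :=
  ⟨_, fun x => by
    simpa using one_add_le_sup_seminorm_apply (𝕜 := ℝ) (m := (k, 0)) le_rfl le_rfl f x⟩

variable {δ₁ δ₃ : ℝ}

lemma exists_one_add_abs_le_mul (hδ : δ₁ ≠ δ₃) : ∃ c, ∀ θ X : ℝ,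
    1 + |θ| ≤ c * ((1 + |θ + δ₁ * X|) * (1 + |θ + δ₃ * X|)) ∧
    1 + |X| ≤ c * ((1 + |θ + δ₁ * X|) * (1 + |θ + δ₃ * X|)) := by
  have hd : δ₃ - δ₁ ≠ 0 := sub_ne_zero.mpr hδ.symm
  set d := δ₃ - δ₁
  refine ⟨max (1 + |δ₃ / d| + |-δ₁ / d|) (1 + |-1 / d| + |1 / d|), fun θ X => ⟨?_, ?_⟩⟩
  · have hθ : θ = δ₃ / d * (θ + δ₁ * X) + -δ₁ / d * (θ + δ₃ * X) := by field_simp; ring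
    calc 1 + |θ| ≤ _ := hθ ▸ one_add_abs_add_mul_le _ _ _ _
      _ ≤ _ := by gcongr; exact le_max_left _ _
  · have hX : X = -1 / d * (θ + δ₁ * X) + 1 / d * (θ + δ₃ * X) := by field_simp; ring
    calc 1 + |X| ≤ _ := hX ▸ one_add_abs_add_mul_le _ _ _ _
      _ ≤ _ := by gcongr; exact le_max_right _ _

lemma exists_pow_mul_norm_integrand_le (hδ : δ₁ ≠ δ₃) (u v : 𝓢(ℝ, ℂ)) (k : ℕ) :
    ∃ C, ∀ θ X : ℝ, |θ| ^ k * ‖u (θ + δ₁ * X) * v (θ + δ₃ * X)‖ ≤ C * (1 + X ^ 2)⁻¹ := by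
  obtain ⟨c, hc⟩ := exists_one_add_abs_le_mul hδ
  obtain ⟨Cu, hCu⟩ := u.exists_one_add_norm_pow_mul_le (k + 2)
  obtain ⟨Cv, hCv⟩ := v.exists_one_add_norm_pow_mul_le (k + 2)
  refine ⟨c ^ (k + 2) * Cu * Cv, fun θ X => ?_⟩
  set a := θ + δ₁ * X
  set b := θ + δ₃ * X
  obtain ⟨hθ, hX⟩ := hc θ X
  have hc0 : 0 ≤ c := nonneg_of_mul_nonneg_left ((by positivity : (0 : ℝ) ≤ 1 + |X|).trans hX)
    (by positivity)
  have hCu0 : 0 ≤ Cu := (by positivity : (0 : ℝ) ≤ _).trans (hCu 0)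
  have hsq : 1 + X ^ 2 ≤ (1 + |X|) ^ 2 := by nlinarith [abs_nonneg X, sq_abs X]
  rw [← div_eq_mul_inv, le_div_iff₀ (by positivity), norm_mul]
  simp only [Real.norm_eq_abs] at hCu hCv
  calc |θ| ^ k * (‖u a‖ * ‖v b‖) * (1 + X ^ 2)
      ≤ (1 + |θ|) ^ k * (1 + |X|) ^ 2 * (‖u a‖ * ‖v b‖) := by
        rw [mul_right_comm]; gcongr; linarith
    _ ≤ (c * ((1 + |a|) * (1 + |b|))) ^ k * (c * ((1 + |a|) * (1 + |b|))) ^ 2 *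
          (‖u a‖ * ‖v b‖) := by gcongr
    _ = c ^ (k + 2) * ((1 + |a|) ^ (k + 2) * ‖u a‖) * ((1 + |b|) ^ (k + 2) * ‖v b‖) := by
        rw [← pow_add, mul_pow, mul_pow]; ring
    _ ≤ c ^ (k + 2) * Cu * Cv := by gcongr; exacts [hCu a, hCv b]

noncomputable def pul (δ₁ δ₃ : ℝ) (u v : 𝓢(ℝ, ℂ)) (θ : ℝ) : ℂ :=
  ∫ X in Ioi 0, u (θ + δ₁ * X) * v (θ + δ₃ * X)

lemma integrable_pul_integrand (hδ : δ₁ ≠ δ₃) (u v : 𝓢(ℝ, ℂ)) (θ : ℝ) :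
    Integrable (fun X => u (θ + δ₁ * X) * v (θ + δ₃ * X)) := by
  obtain ⟨C, hC⟩ := exists_pow_mul_norm_integrand_le hδ u v 0
  refine (integrable_inv_one_add_sq.const_mul C).mono' (by fun_prop) (.of_forall fun X => ?_)
  simpa using hC θ X

lemma exists_pow_mul_norm_pul_le (hδ : δ₁ ≠ δ₃) (u v : 𝓢(ℝ, ℂ)) (k : ℕ) :
    ∃ C, ∀ θ, |θ| ^ k * ‖pul δ₁ δ₃ u v θ‖ ≤ C := by
  obtain ⟨C, hC⟩ := exists_pow_mul_norm_integrand_le hδ u v k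
  refine ⟨∫ X, C * (1 + X ^ 2)⁻¹, fun θ => ?_⟩
  have hf := (integrable_pul_integrand hδ u v θ).norm
  calc |θ| ^ k * ‖pul δ₁ δ₃ u v θ‖
      ≤ |θ| ^ k * ∫ X, ‖u (θ + δ₁ * X) * v (θ + δ₃ * X)‖ := by
        gcongr
        exact (norm_integral_le_integral_norm _).trans
          (setIntegral_le_integral hf (.of_forall fun _ => norm_nonneg _))
    _ = ∫ X, |θ| ^ k * ‖u (θ + δ₁ * X) * v (θ + δ₃ * X)‖ := (integral_const_mul _ _).symm
    _ ≤ ∫ X, C * (1 + X ^ 2)⁻¹ :=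
        integral_mono (hf.const_mul _) (integrable_inv_one_add_sq.const_mul C) (hC θ)

lemma hasDerivAt_pul_integrand (u v : 𝓢(ℝ, ℂ)) (θ X : ℝ) :
    HasDerivAt (fun θ => u (θ + δ₁ * X) * v (θ + δ₃ * X))
      (derivCLM ℝ ℂ u (θ + δ₁ * X) * v (θ + δ₃ * X) +
        u (θ + δ₁ * X) * derivCLM ℝ ℂ v (θ + δ₃ * X)) θ := by
  simp only [derivCLM_apply]
  exact ((u.differentiableAt.hasDerivAt.comp_add_const θ _).mul
    (v.differentiableAt.hasDerivAt.comp_add_const θ _))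

lemma hasDerivAt_pul (hδ : δ₁ ≠ δ₃) (u v : 𝓢(ℝ, ℂ)) (θ : ℝ) :
    HasDerivAt (pul δ₁ δ₃ u v)
      (pul δ₁ δ₃ (derivCLM ℝ ℂ u) v θ + pul δ₁ δ₃ u (derivCLM ℝ ℂ v) θ) θ := by
  obtain ⟨C₁, hC₁⟩ := exists_pow_mul_norm_integrand_le hδ (derivCLM ℝ ℂ u) v 0
  obtain ⟨C₂, hC₂⟩ := exists_pow_mul_norm_integrand_le hδ u (derivCLM ℝ ℂ v) 0
  simp only [pow_zero, one_mul] at hC₁ hC₂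
  have h₁ := integrable_pul_integrand hδ (derivCLM ℝ ℂ u) v θ
  have h₂ := integrable_pul_integrand hδ u (derivCLM ℝ ℂ v) θ
  have key := hasDerivAt_integral_of_dominated_loc_of_deriv_le (μ := volume.restrict (Ioi 0))
    (F := fun θ X => u (θ + δ₁ * X) * v (θ + δ₃ * X))
    (F' := fun θ X => derivCLM ℝ ℂ u (θ + δ₁ * X) * v (θ + δ₃ * X) +
      u (θ + δ₁ * X) * derivCLM ℝ ℂ v (θ + δ₃ * X))
    (bound := fun X => (C₁ + C₂) * (1 + X ^ 2)⁻¹) Filter.univ_mem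
    (.of_forall fun _ => (by fun_prop : Continuous _).aestronglyMeasurable)
    (integrable_pul_integrand hδ u v θ).integrableOn
    (h₁.add h₂).aestronglyMeasurable.restrict
    (.of_forall fun X θ _ => (norm_add_le _ _).trans (by linarith [hC₁ θ X, hC₂ θ X]))
    (integrable_inv_one_add_sq.const_mul _).integrableOn
    (.of_forall fun X θ _ => hasDerivAt_pul_integrand u v θ X)
  rw [integral_add h₁.integrableOn h₂.integrableOn] at key
  exact key.2

lemma deriv_pul (hδ : δ₁ ≠ δ₃) (u v : 𝓢(ℝ, ℂ)) :
    deriv (pul δ₁ δ₃ u v) = pul δ₁ δ₃ (derivCLM ℝ ℂ u) v + pul δ₁ δ₃ u (derivCLM ℝ ℂ v) :=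
  funext fun θ => (hasDerivAt_pul hδ u v θ).deriv

lemma differentiable_pul (hδ : δ₁ ≠ δ₃) (u v : 𝓢(ℝ, ℂ)) : Differentiable ℝ (pul δ₁ δ₃ u v) :=
  fun θ => (hasDerivAt_pul hδ u v θ).differentiableAt

lemma contDiff_pul (hδ : δ₁ ≠ δ₃) (n : ℕ) (u v : 𝓢(ℝ, ℂ)) : ContDiff ℝ n (pul δ₁ δ₃ u v) := by
  induction n generalizing u v with
  | zero => exact contDiff_zero.mpr (differentiable_pul hδ u v).continuous
  | succ n ih =>
    rw [Nat.cast_succ, contDiff_succ_iff_deriv, deriv_pul hδ]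
    exact ⟨differentiable_pul hδ u v, by simp, (ih _ v).add (ih u _)⟩

lemma exists_pow_mul_norm_iteratedDeriv_pul_le (hδ : δ₁ ≠ δ₃) (n k : ℕ) (u v : 𝓢(ℝ, ℂ)) :
    ∃ C, ∀ θ, |θ| ^ k * ‖iteratedDeriv n (pul δ₁ δ₃ u v) θ‖ ≤ C := by
  induction n generalizing u v with
  | zero => simpa using exists_pow_mul_norm_pul_le hδ u v k
  | succ n ih =>
    obtain ⟨C₁, hC₁⟩ := ih (derivCLM ℝ ℂ u) v
    obtain ⟨C₂, hC₂⟩ := ih u (derivCLM ℝ ℂ v)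
    refine ⟨C₁ + C₂, fun θ => ?_⟩
    rw [iteratedDeriv_succ', deriv_pul hδ, iteratedDeriv_add
      (contDiff_pul hδ n _ v).contDiffAt (contDiff_pul hδ n u _).contDiffAt]
    calc _ ≤ |θ| ^ k * (‖iteratedDeriv n (pul δ₁ δ₃ (derivCLM ℝ ℂ u) v) θ‖ +
          ‖iteratedDeriv n (pul δ₁ δ₃ u (derivCLM ℝ ℂ v)) θ‖) := by gcongr; exact norm_add_le _ _
      _ ≤ C₁ + C₂ := by linarith [hC₁ θ, hC₂ θ]

noncomputable def pulSchwartzMap (hδ : δ₁ ≠ δ₃) (u v : 𝓢(ℝ, ℂ)) : 𝓢(ℝ, ℂ) where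
  toFun := pul δ₁ δ₃ u v
  smooth' := contDiff_infty.mpr fun n => contDiff_pul hδ n u v
  decay' k n := by
    simpa only [norm_iteratedFDeriv_eq_norm_iteratedDeriv, Real.norm_eq_abs]
      using exists_pow_mul_norm_iteratedDeriv_pul_le hδ n k u v

theorem stmt12_general (δ₁ δ₃ : ℝ) (hδ₃ : δ₃ = 1 + δ₁)
    (u v : SchwartzMap ℝ ℂ) :
    (∀ θ : ℝ,
      IntegrableOn (fun X => u (θ + δ₁ * X) * v (θ + δ₃ * X)) (Set.Ioi 0)) ∧
    ∃ w : SchwartzMap ℝ ℂ, ∀ θ : ℝ,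
      w θ = ∫ X in Set.Ioi (0 : ℝ), u (θ + δ₁ * X) * v (θ + δ₃ * X) := by
  have hδ : δ₁ ≠ δ₃ := by linarith
  exact ⟨fun θ => (integrable_pul_integrand hδ u v θ).integrableOn,
    pulSchwartzMap hδ u v, fun _ => rfl⟩

theorem stmt12 (δ₁ δ₃ : ℝ) (hδ₁ : δ₁ ≠ 0) (hδ₃ : δ₃ = 1 + δ₁) (hδ₃' : δ₃ ≠ 0)
    (u v : SchwartzMap ℝ ℂ) :
    (∀ θ : ℝ,
      IntegrableOn (fun X => u (θ + δ₁ * X) * v (θ + δ₃ * X)) (Set.Ioi 0)) ∧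
    ∃ w : SchwartzMap ℝ ℂ, ∀ θ : ℝ,
      w θ = ∫ X in Set.Ioi (0 : ℝ), u (θ + δ₁ * X) * v (θ + δ₃ * X) :=
  stmt12_general δ₁ δ₃ hδ₃ u v
end

section
/- For all Schwartz functions u, v ∈ 𝒮(ℝ), the function F₁(θ) := (1/2) ∫_ℝ u(θ + δ₁s) · v(θ + δ₃s) ds is well defined for every θ ∈ ℝ, and its Fourier transform satisfies, for every ξ ∈ ℝ: ∫_ℝ e^{−iξθ} F₁(θ) dθ = (1/2) · û(δ₃ξ) · v̂(−δ₁ξ). -/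
/-!
The linear change of variables `(θ, s) ↦ (x, y) = (θ + δ₁ s, θ + δ₃ s)` has determinant
`δ₃ - δ₁ = 1`, so it preserves Lebesgue measure on `ℝ²`; it is the composite of the shears
`(θ, s) ↦ (θ + δ₁ s, s)` and `(x, s) ↦ (x, x + s)`. Since `θ = δ₃ x - δ₁ y`, the phase
`e^{-iξθ}` splits as `e^{-iδ₃ξx} e^{iδ₁ξy}`, and the double integral defining the Fourier
transform of `F₁` becomes a product of two one-dimensional Fourier integrals.
-/

open MeasureTheory

theorem measurePreserving_add_comp_snd_prod {G H : Type*} [AddGroup G] [MeasurableSpace G]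
    [MeasurableAdd₂ G] [MeasurableSpace H] (μ : Measure G) [μ.IsAddRightInvariant] [SFinite μ]
    (ν : Measure H) [SFinite ν] {φ : H → G} (hφ : Measurable φ) :
    MeasurePreserving (fun z : G × H => (z.1 + φ z.2, z.2)) (μ.prod ν) (μ.prod ν) := by
  have hskew : MeasurePreserving (fun z : H × G => (z.1, z.2 + φ z.1)) (ν.prod μ) (ν.prod μ) :=
    (MeasurePreserving.id ν).skew_product (g := fun y x => x + φ y)
      (measurable_snd.add (hφ.comp measurable_fst))
      (Filter.Eventually.of_forall fun y => map_add_right_eq_self μ (φ y))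
  exact Measure.measurePreserving_swap.comp (hskew.comp Measure.measurePreserving_swap)

theorem measurePreserving_add_mul_prodMk_add_mul {a b : ℝ} (hab : b = 1 + a) :
    MeasurePreserving (fun z : ℝ × ℝ => (z.1 + a * z.2, z.1 + b * z.2)) := by
  have hshear := measurePreserving_add_comp_snd_prod volume volume (measurable_const_mul a)
  rw [Measure.volume_eq_prod]
  convert (measurePreserving_prod_add volume volume).comp hshear using 2 with z
  simp only [Function.comp_apply, hab, Prod.mk.injEq, true_and]
  ring

theorem Complex.exp_neg_I_mul_eq_mul_of_eq_one_add {a b : ℝ} (hab : b = 1 + a) (ξ θ s : ℝ) :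
    Complex.exp (-(Complex.I * ξ * θ)) =
      Complex.exp (-(Complex.I * (b * ξ) * ↑(θ + a * s))) *
        Complex.exp (-(Complex.I * (-a * ξ) * ↑(θ + b * s))) := by
  rw [← Complex.exp_add]
  congr 1
  push_cast [hab]
  ring

theorem MeasureTheory.Integrable.exp_neg_I_mul {f : ℝ → ℂ} (hf : Integrable f) (c : ℝ) :
    Integrable (fun x : ℝ => Complex.exp (-(Complex.I * c * x)) * f x) :=
  hf.bdd_mul (c := 1) (by fun_prop) (Filter.Eventually.of_forall fun x => by
    rw [Complex.norm_exp]; simp)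

theorem integral_exp_mul_integral_mul_comp_add_mul {u v : ℝ → ℂ} (hu : Integrable u)
    (hv : Integrable v) {a b : ℝ} (hab : b = 1 + a) (ξ : ℝ) :
    (∫ θ : ℝ, Complex.exp (-(Complex.I * ξ * θ)) * ∫ s : ℝ, u (θ + a * s) * v (θ + b * s)) =
      (∫ x : ℝ, Complex.exp (-(Complex.I * (b * ξ) * x)) * u x) *
        ∫ y : ℝ, Complex.exp (-(Complex.I * (-a * ξ) * y)) * v y := by
  let f : ℝ → ℂ := fun x => Complex.exp (-(Complex.I * (b * ξ) * x)) * u x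
  let g : ℝ → ℂ := fun y => Complex.exp (-(Complex.I * (-a * ξ) * y)) * v y
  let G : ℝ × ℝ → ℂ := fun z => f z.1 * g z.2
  have hf : Integrable f := by simpa only [Complex.ofReal_mul] using hu.exp_neg_I_mul (b * ξ)
  have hg : Integrable g := by
    simpa only [Complex.ofReal_mul, Complex.ofReal_neg] using hv.exp_neg_I_mul (-a * ξ)
  have hG : Integrable G := hf.mul_prod hg
  let T : ℝ × ℝ → ℝ × ℝ := fun z => (z.1 + a * z.2, z.1 + b * z.2)
  have hT : MeasurePreserving T := measurePreserving_add_mul_prodMk_add_mul hab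
  have hGT : ∀ θ s : ℝ, Complex.exp (-(Complex.I * ξ * θ)) * (u (θ + a * s) * v (θ + b * s)) =
      G (T (θ, s)) := fun θ s => by
    simp only [G, T, f, g, Complex.exp_neg_I_mul_eq_mul_of_eq_one_add hab ξ θ s]
    ring
  calc (∫ θ : ℝ, Complex.exp (-(Complex.I * ξ * θ)) * ∫ s : ℝ, u (θ + a * s) * v (θ + b * s))
      = ∫ θ : ℝ, ∫ s : ℝ, G (T (θ, s)) := by simp_rw [← integral_const_mul, hGT]
    _ = ∫ z : ℝ × ℝ, G (T z) := (integral_prod _ (hT.integrable_comp_of_integrable hG)).symm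
    _ = ∫ z : ℝ × ℝ, G z := by
      rw [← integral_map hT.aemeasurable (by rw [hT.map_eq]; exact hG.aestronglyMeasurable),
        hT.map_eq]
    _ = _ := integral_prod_mul _ _

theorem integrable_mul_comp_add_mul {u v : ℝ → ℂ} (hu : Continuous u) {C : ℝ}
    (huC : ∀ x, ‖u x‖ ≤ C) (hv : Integrable v) (θ a : ℝ) {b : ℝ} (hb : b ≠ 0) :
    Integrable (fun s : ℝ => u (θ + a * s) * v (θ + b * s)) := by
  have hv' : Integrable (fun s : ℝ => v (θ + b * s)) := by
    simpa only [add_comm θ] using (hv.comp_add_right θ).comp_mul_left' hb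
  exact hv'.bdd_mul (by fun_prop) (Filter.Eventually.of_forall fun s => huC _)

theorem stmt13_general (δ₁ δ₃ : ℝ) (hδ₃ : δ₃ = 1 + δ₁) (hδ₃' : δ₃ ≠ 0)
    (u v : SchwartzMap ℝ ℂ) :
    (∀ θ : ℝ, Integrable (fun s : ℝ => u (θ + δ₁ * s) * v (θ + δ₃ * s))) ∧
    ∀ ξ : ℝ,
      (∫ θ : ℝ, Complex.exp (-(Complex.I * ξ * θ)) *
          ((1/2 : ℂ) * ∫ s : ℝ, u (θ + δ₁ * s) * v (θ + δ₃ * s))) =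
        (1/2 : ℂ) * (∫ θ : ℝ, Complex.exp (-(Complex.I * (δ₃ * ξ) * θ)) * u θ) *
          (∫ θ : ℝ, Complex.exp (-(Complex.I * (-δ₁ * ξ) * θ)) * v θ) := by
  refine ⟨fun θ => integrable_mul_comp_add_mul u.continuous (u.norm_le_seminorm ℝ)
    v.integrable θ δ₁ hδ₃', fun ξ => ?_⟩
  simp_rw [mul_left_comm _ (1/2 : ℂ), integral_const_mul,
    integral_exp_mul_integral_mul_comp_add_mul u.integrable v.integrable hδ₃ ξ, mul_assoc]

theorem stmt13 (δ₁ δ₃ : ℝ) (hδ₁ : δ₁ ≠ 0) (hδ₃ : δ₃ = 1 + δ₁) (hδ₃' : δ₃ ≠ 0)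
    (u v : SchwartzMap ℝ ℂ) :
    (∀ θ : ℝ, Integrable (fun s : ℝ => u (θ + δ₁ * s) * v (θ + δ₃ * s))) ∧
    ∀ ξ : ℝ,
      (∫ θ : ℝ, Complex.exp (-(Complex.I * ξ * θ)) *
          ((1/2 : ℂ) * ∫ s : ℝ, u (θ + δ₁ * s) * v (θ + δ₃ * s))) =
        (1/2 : ℂ) * (∫ θ : ℝ, Complex.exp (-(Complex.I * (δ₃ * ξ) * θ)) * u θ) *
          (∫ θ : ℝ, Complex.exp (-(Complex.I * (-δ₁ * ξ) * θ)) * v θ) :=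
  stmt13_general δ₁ δ₃ hδ₃ hδ₃' u v
end

section
/- (Generic validity of the small divisor condition.) For every real number γ > 1, the set of m ∈ (0,1) for which there exists a constant c > 0 such that |p + q·m| ≥ c · (p² + q²)^{−γ/2} for all (p,q) ∈ ℤ² \ {(0,0)} has full Lebesgue measure in (0,1); that is, its complement in (0,1) is a Lebesgue null set. -/
/-!
Since `γ + 1 > 2`, Borel–Cantelli (`ae_not_liouvilleWith`) shows that almost every real `x` is
irrational and satisfies `|x - m / n| ≥ n ^ (-(γ + 1))` for all large `n`. Irrationality bounds
`|n x - m|` away from `0` for the finitely many remaining denominators, which gives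
`|p + q x| ≥ c |q| ^ (-γ)` for `q ≠ 0`; finally `(p² + q²) ^ (-γ/2) ≤ |q| ^ (-γ)`.
-/

open MeasureTheory Filter

def DiophantineWith (γ x : ℝ) : Prop :=
  ∃ c > (0 : ℝ), ∀ p q : ℤ, (p ≠ 0 ∨ q ≠ 0) →
    c * (((p : ℝ) ^ 2 + (q : ℝ) ^ 2) ^ (-(γ / 2))) ≤ |(p : ℝ) + (q : ℝ) * x|

theorem exists_pos_forall_le_of_eventually_le {f : ℕ → ℝ} {a : ℝ} (ha : 0 < a)
    (hpos : ∀ n, 0 < f n) (hf : ∀ᶠ n in atTop, a ≤ f n) : ∃ c > 0, ∀ n, c ≤ f n := by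
  obtain ⟨N, hN⟩ := eventually_atTop.mp hf
  have hinit : ∀ N, ∃ c > 0, ∀ n < N, c ≤ f n := by
    intro N
    induction N with
    | zero => exact ⟨1, one_pos, fun n hn => absurd hn n.not_lt_zero⟩
    | succ N ih =>
      obtain ⟨c, hc, hcf⟩ := ih
      refine ⟨min c (f N), lt_min hc (hpos N), fun n hn => ?_⟩
      rcases Nat.lt_succ_iff_lt_or_eq.mp hn with hn | rfl
      · exact (min_le_left _ _).trans (hcf n hn)
      · exact min_le_right _ _
  obtain ⟨c, hc, hcf⟩ := hinit N
  refine ⟨min a c, lt_min ha hc, fun n => ?_⟩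
  rcases lt_or_ge n N with hn | hn
  · exact (min_le_right _ _).trans (hcf n hn)
  · exact (min_le_left _ _).trans (hN n hn)

theorem Irrational.abs_sub_round_pos {y : ℝ} (hy : Irrational y) : 0 < |y - round y| :=
  abs_pos.mpr (sub_ne_zero.mpr (hy.ne_int _))

theorem eventually_rpow_neg_le_abs_natCast_mul_sub_of_not_liouvilleWith {x γ : ℝ}
    (hx : Irrational x) (hL : ¬LiouvilleWith (γ + 1) x) :
    ∀ᶠ n : ℕ in atTop, ∀ m : ℤ, (n : ℝ) ^ (-γ) ≤ |n * x - m| := by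
  simp only [LiouvilleWith, not_exists, not_frequently, not_and, not_lt] at hL
  filter_upwards [hL 1, eventually_gt_atTop 0] with n hn hn0 m
  have hn' : (0 : ℝ) < n := by exact_mod_cast hn0
  calc (n : ℝ) ^ (-γ) = n * (1 / (n : ℝ) ^ (γ + 1)) := by
        rw [Real.rpow_add hn', Real.rpow_one, Real.rpow_neg hn'.le]; field_simp
    _ ≤ n * |x - m / n| := by gcongr; exact hn m (by exact_mod_cast hx.ne_rat (m / n))
    _ = |n * x - m| := by
        rw [← abs_of_pos hn', ← abs_mul, abs_of_pos hn', mul_sub, mul_div_cancel₀ _ hn'.ne']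

theorem exists_pos_le_abs_natCast_mul_sub_of_not_liouvilleWith {x γ : ℝ} (hx : Irrational x)
    (hL : ¬LiouvilleWith (γ + 1) x) :
    ∃ c > 0, ∀ n : ℕ, 0 < n → ∀ m : ℤ, c * (n : ℝ) ^ (-γ) ≤ |n * x - m| := by
  have hpow : ∀ n : ℕ, (0 : ℝ) < ((n + 1 : ℕ) : ℝ) ^ (-γ) := fun n => by positivity
  obtain ⟨c, hc, hcf⟩ := exists_pos_forall_le_of_eventually_le one_pos
    (f := fun n => |(n + 1 : ℕ) * x - round ((n + 1 : ℕ) * x)| / ((n + 1 : ℕ) : ℝ) ^ (-γ))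
    (fun n => div_pos (hx.natCast_mul n.succ_ne_zero).abs_sub_round_pos (hpow n))
    ((tendsto_add_atTop_nat 1).eventually
        (eventually_rpow_neg_le_abs_natCast_mul_sub_of_not_liouvilleWith hx hL)
      |>.mono fun n hn => (one_le_div (hpow n)).mpr (hn _))
  refine ⟨c, hc, fun n hn m => ?_⟩
  obtain ⟨k, rfl⟩ := Nat.exists_eq_add_one_of_ne_zero hn.ne'
  exact ((le_div_iff₀ (hpow k)).mp (hcf k)).trans (round_le _ m)

theorem sq_add_sq_rpow_neg_half_le {γ : ℝ} (hγ : 0 ≤ γ) (a : ℝ) {b : ℝ} (hb : b ≠ 0) :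
    (a ^ 2 + b ^ 2) ^ (-(γ / 2)) ≤ |b| ^ (-γ) := by
  calc (a ^ 2 + b ^ 2) ^ (-(γ / 2)) ≤ (b ^ 2) ^ (-(γ / 2)) :=
        Real.rpow_le_rpow_of_nonpos (by positivity) (by nlinarith) (by linarith)
    _ = |b| ^ (-γ) := by
        rw [← sq_abs, ← Real.rpow_natCast, ← Real.rpow_mul (abs_nonneg b)]
        ring_nf

theorem diophantineWith_of_not_liouvilleWith {x γ : ℝ} (hγ : 0 ≤ γ) (hx : Irrational x)
    (hL : ¬LiouvilleWith (γ + 1) x) : DiophantineWith γ x := by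
  obtain ⟨c, hc, hcn⟩ := exists_pos_le_abs_natCast_mul_sub_of_not_liouvilleWith hx hL
  have hcq : ∀ p q : ℤ, q ≠ 0 → c * |(q : ℝ)| ^ (-γ) ≤ |(p : ℝ) + q * x| := by
    intro p q hq
    obtain ⟨n, rfl | rfl⟩ := Int.eq_nat_or_neg q
    · have hn : 0 < n := by omega
      simpa [add_comm] using hcn n hn (-p)
    · have hn : 0 < n := by omega
      have h := hcn n hn p
      rw [abs_sub_comm] at h
      simpa [sub_eq_add_neg] using h
  refine ⟨min c 1, lt_min hc one_pos, fun p q hpq => ?_⟩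
  rcases eq_or_ne q 0 with rfl | hq
  · have hp : p ≠ 0 := hpq.resolve_right (not_not.mpr rfl)
    have hp1 : (1 : ℝ) ≤ |(p : ℝ)| := by exact_mod_cast Int.one_le_abs hp
    calc min c 1 * ((p : ℝ) ^ 2 + ((0 : ℤ) : ℝ) ^ 2) ^ (-(γ / 2)) ≤ 1 * 1 := by
          gcongr
          · exact min_le_right _ _
          · refine Real.rpow_le_one_of_one_le_of_nonpos ?_ (by linarith)
            simpa using (one_le_sq_iff_one_le_abs _).mpr hp1
      _ ≤ |(p : ℝ) + ((0 : ℤ) : ℝ) * x| := by simpa using hp1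
  · calc min c 1 * ((p : ℝ) ^ 2 + (q : ℝ) ^ 2) ^ (-(γ / 2))
        ≤ c * |(q : ℝ)| ^ (-γ) := by
          gcongr
          · exact min_le_left _ _
          · exact sq_add_sq_rpow_neg_half_le hγ _ (by exact_mod_cast hq)
      _ ≤ _ := hcq p q hq

theorem ae_diophantineWith {γ : ℝ} (hγ : 1 < γ) : ∀ᵐ x, DiophantineWith γ x := by
  filter_upwards [ae_not_liouvilleWith,
    (Set.countable_range ((↑) : ℚ → ℝ)).ae_notMem volume] with x hL hx
  exact diophantineWith_of_not_liouvilleWith (by linarith) hx (hL _ (by linarith))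

theorem stmt15 (γ : ℝ) (hγ : 1 < γ) :
    volume (Set.Ioo (0 : ℝ) 1 \
      {m : ℝ | ∃ c > (0 : ℝ), ∀ p q : ℤ, (p ≠ 0 ∨ q ≠ 0) →
        c * (((p : ℝ) ^ 2 + (q : ℝ) ^ 2) ^ (-(γ / 2))) ≤ |(p : ℝ) + (q : ℝ) * m|}) = 0 :=
  measure_mono_null (fun _ hx => hx.2) (ae_iff.mp (ae_diophantineWith hγ))
end

section
/- For every real number γ > 1 there exists a constant K > 0 such that for every c ∈ (0,1), the set N_c := { m ∈ (0,1) : there exist (p,q) ∈ ℤ² with q ≠ 0 and |p + q·m| < c · (p² + q²)^{−γ/2} } has Lebesgue (outer) measure at most K·c. -/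
open MeasureTheory ENNReal

theorem stmt16 (γ : ℝ) (hγ : 1 < γ) :
    ∃ K > (0 : ℝ), ∀ c : ℝ, c ∈ Set.Ioo (0 : ℝ) 1 →
      volume {m : ℝ | m ∈ Set.Ioo (0 : ℝ) 1 ∧ ∃ p q : ℤ, q ≠ 0 ∧
          |(p : ℝ) + (q : ℝ) * m| < c * (((p : ℝ) ^ 2 + (q : ℝ) ^ 2) ^ (-(γ / 2)))} ≤
        ENNReal.ofReal (K * c) := by
  have hsum : Summable (fun q : ℤ => |(q : ℝ)| ^ (-γ)) := Real.summable_abs_int_rpow hγ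
  have hpos : (0:ℝ) < ∑' q : ℤ, |(q : ℝ)| ^ (-γ) := by
    refine Summable.tsum_pos hsum (fun i => Real.rpow_nonneg (abs_nonneg _) _) 1 ?_
    norm_num
  refine ⟨6 * ∑' q : ℤ, |(q : ℝ)| ^ (-γ), by linarith, ?_⟩
  intro c hc
  obtain ⟨hc0, hc1⟩ := hc
  set F : ℤ × ℤ → Set ℝ := fun z =>
    {m : ℝ | z.1 ≠ 0 ∧ m ∈ Set.Ioo (0:ℝ) 1 ∧
      |(z.2 : ℝ) + (z.1 : ℝ) * m| < c * (((z.2 : ℝ) ^ 2 + (z.1 : ℝ) ^ 2) ^ (-(γ / 2)))}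
    with hF
  have hcover : {m : ℝ | m ∈ Set.Ioo (0 : ℝ) 1 ∧ ∃ p q : ℤ, q ≠ 0 ∧
      |(p : ℝ) + (q : ℝ) * m| < c * (((p : ℝ) ^ 2 + (q : ℝ) ^ 2) ^ (-(γ / 2)))}
      ⊆ ⋃ z : ℤ × ℤ, F z := by
    rintro m ⟨hm, p, q, hq, hlt⟩
    exact Set.mem_iUnion.2 ⟨(q, p), hq, hm, hlt⟩
  set B : ℤ × ℤ → ℝ≥0∞ := fun z =>
    if z.1 ≠ 0 ∧ |z.2| ≤ |z.1| then ENNReal.ofReal (2 * c * |(z.1:ℝ)| ^ (-γ - 1)) else 0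
    with hB
  -- basic facts
  have hvol : ∀ z : ℤ × ℤ, volume (F z) ≤ B z := by
    rintro ⟨q, p⟩
    by_cases hq : q = 0
    · have : F (q, p) = ∅ := by
        ext m; simp [hF, hq]
      simp [this]
    have hq1 : (1:ℝ) ≤ |(q:ℝ)| := by
      have : (1:ℤ) ≤ |q| := Int.one_le_abs hq
      calc (1:ℝ) = ((1:ℤ):ℝ) := by norm_num
        _ ≤ ((|q|:ℤ):ℝ) := by exact_mod_cast this
        _ = |(q:ℝ)| := by push_cast; ring
    have hqr : (0:ℝ) < |(q:ℝ)| := lt_of_lt_of_le one_pos hq1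
    by_cases hpq : |p| ≤ |q|
    · -- the set is contained in a small ball
      have hsub : F (q,p) ⊆ Metric.ball (-(p:ℝ)/q) (c * |(q:ℝ)| ^ (-γ - 1)) := by
        rintro m ⟨-, hm, hlt⟩
        have hbase : (0:ℝ) < (q:ℝ)^2 := by positivity
        have h1 : ((p:ℝ)^2 + (q:ℝ)^2) ^ (-(γ/2)) ≤ ((q:ℝ)^2) ^ (-(γ/2)) := by
          apply Real.rpow_le_rpow_of_nonpos hbase (by nlinarith)
          have : (0:ℝ) < γ/2 := by linarith
          linarith
        have h2 : ((q:ℝ)^2) ^ (-(γ/2)) = |(q:ℝ)| ^ (-γ) := by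
          rw [← sq_abs, ← Real.rpow_natCast |(q:ℝ)| 2,
            ← Real.rpow_mul (abs_nonneg _)]
          congr 1
          ring
        have h3 : |(p:ℝ) + (q:ℝ) * m| < c * |(q:ℝ)| ^ (-γ) := by
          calc |(p:ℝ) + (q:ℝ) * m| < c * (((p:ℝ)^2 + (q:ℝ)^2) ^ (-(γ/2))) := hlt
            _ ≤ c * (((q:ℝ)^2) ^ (-(γ/2))) := by
                exact mul_le_mul_of_nonneg_left h1 hc0.le
            _ = c * |(q:ℝ)| ^ (-γ) := by rw [h2]
        rw [Metric.mem_ball, Real.dist_eq]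
        have hqne : (q:ℝ) ≠ 0 := by exact_mod_cast hq
        have key : m - -(p:ℝ)/q = ((p:ℝ) + (q:ℝ)*m)/q := by
          field_simp; ring
        rw [key, abs_div]
        rw [div_lt_iff₀ hqr]
        calc |(p:ℝ) + (q:ℝ)*m| < c * |(q:ℝ)| ^ (-γ) := h3
          _ = c * |(q:ℝ)| ^ (-γ - 1) * |(q:ℝ)| := by
              rw [mul_assoc, ← Real.rpow_add_one (ne_of_gt hqr)]
              ring_nf
      have hball : volume (Metric.ball (-(p:ℝ)/q) (c * |(q:ℝ)| ^ (-γ - 1)))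
          = ENNReal.ofReal (2 * c * |(q:ℝ)| ^ (-γ - 1)) := by
        rw [Real.volume_ball]; ring_nf
      have : B (q, p) = ENNReal.ofReal (2 * c * |(q:ℝ)| ^ (-γ - 1)) := by
        simp [hB, hq, hpq]
      rw [this, ← hball]
      exact measure_mono hsub
    · -- the set is empty
      have : F (q, p) = ∅ := by
        ext m
        simp only [hF, Set.mem_setOf_eq, Set.mem_empty_iff_false, iff_false, not_and]
        rintro - ⟨hm0, hm1⟩
        push_neg at hpq
        have hpq' : |q| + 1 ≤ |p| := hpq
        have hpr : |(q:ℝ)| + 1 ≤ |(p:ℝ)| := by exact_mod_cast hpq'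
        have hbase1 : (1:ℝ) ≤ (p:ℝ)^2 + (q:ℝ)^2 := by
          nlinarith [sq_abs (p:ℝ), sq_abs (q:ℝ), abs_nonneg (q:ℝ), abs_nonneg (p:ℝ)]
        have hle1 : ((p:ℝ)^2 + (q:ℝ)^2) ^ (-(γ/2)) ≤ 1 := by
          apply Real.rpow_le_one_of_one_le_of_nonpos hbase1
          linarith
        have hrhs : c * (((p:ℝ)^2 + (q:ℝ)^2) ^ (-(γ/2))) < 1 := by
          have hnn : (0:ℝ) ≤ ((p:ℝ)^2 + (q:ℝ)^2) ^ (-(γ/2)) := by positivity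
          nlinarith
        have hlow : (1:ℝ) ≤ |(p:ℝ) + (q:ℝ) * m| := by
          have h1 : |(p:ℝ)| - |(q:ℝ)*m| ≤ |(p:ℝ) + (q:ℝ)*m| := by
            have := abs_sub_abs_le_abs_sub (p:ℝ) (-((q:ℝ)*m))
            rw [abs_neg, sub_neg_eq_add] at this
            exact this
          have h2 : |(q:ℝ)*m| ≤ |(q:ℝ)| := by
            rw [abs_mul, abs_of_pos hm0]
            nlinarith
          linarith
        intro hlt
        linarith
      simp [this]
  -- sum the bounds
  have hsum2 : ∑' z : ℤ × ℤ, B z ≤ ENNReal.ofReal (6 * (∑' q : ℤ, |(q : ℝ)| ^ (-γ)) * c) := by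
    rw [ENNReal.tsum_prod']
    have hinner : ∀ q : ℤ, (∑' p : ℤ, B (q, p)) ≤ ENNReal.ofReal (6 * c * |(q:ℝ)| ^ (-γ)) := by
      intro q
      by_cases hq : q = 0
      · have : ∀ p : ℤ, B (q, p) = 0 := by intro p; simp [hB, hq]
        simp [this]
      have hq1 : (1:ℝ) ≤ |(q:ℝ)| := by
        have : (1:ℤ) ≤ |q| := Int.one_le_abs hq
        calc (1:ℝ) = ((1:ℤ):ℝ) := by norm_num
          _ ≤ ((|q|:ℤ):ℝ) := by exact_mod_cast this
          _ = |(q:ℝ)| := by push_cast; ring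
      have hqr : (0:ℝ) < |(q:ℝ)| := lt_of_lt_of_le one_pos hq1
      have hzero : ∀ p ∉ Finset.Icc (-|q|) |q|, B (q, p) = 0 := by
        intro p hp
        have : ¬ |p| ≤ |q| := by
          simpa [Finset.mem_Icc, abs_le] using hp
        simp [hB, this]
      rw [tsum_eq_sum hzero]
      have hconst : ∀ p ∈ Finset.Icc (-|q|) |q|,
          B (q, p) = ENNReal.ofReal (2 * c * |(q:ℝ)| ^ (-γ - 1)) := by
        intro p hp
        have : |p| ≤ |q| := by simpa [Finset.mem_Icc, abs_le] using hp
        simp [hB, hq, this]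
      rw [Finset.sum_congr rfl hconst, Finset.sum_const]
      have hcard : (Finset.Icc (-|q|) |q|).card = (2 * |q| + 1).toNat := by
        rw [Int.card_Icc]; congr 1; ring
      rw [hcard, nsmul_eq_mul]
      have hcardR : (((2 * |q| + 1).toNat : ℕ) : ℝ) = 2 * |(q:ℝ)| + 1 := by
        have h0 : (0:ℤ) ≤ 2 * |q| + 1 := by positivity
        have : (((2 * |q| + 1).toNat : ℕ) : ℤ) = 2 * |q| + 1 := Int.toNat_of_nonneg h0
        have := congrArg (fun x : ℤ => (x : ℝ)) this
        push_cast at this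
        rw [this]
      have hcast : (((2 * |q| + 1).toNat : ℕ) : ℝ≥0∞) * ENNReal.ofReal (2 * c * |(q:ℝ)| ^ (-γ - 1))
          = ENNReal.ofReal ((2 * |(q:ℝ)| + 1) * (2 * c * |(q:ℝ)| ^ (-γ - 1))) := by
        rw [← ENNReal.ofReal_natCast, ← ENNReal.ofReal_mul (by positivity), hcardR]
      rw [hcast]
      apply ENNReal.ofReal_le_ofReal
      have hrp : |(q:ℝ)| ^ (-γ) = |(q:ℝ)| ^ (-γ - 1) * |(q:ℝ)| := by
        rw [← Real.rpow_add_one (ne_of_gt hqr)]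
        ring_nf
      have ht : (0:ℝ) ≤ |(q:ℝ)| ^ (-γ - 1) := Real.rpow_nonneg (abs_nonneg _) _
      rw [hrp]
      nlinarith [mul_nonneg hc0.le ht]
    calc (∑' q : ℤ, ∑' p : ℤ, B (q, p)) ≤ ∑' q : ℤ, ENNReal.ofReal (6 * c * |(q:ℝ)| ^ (-γ)) :=
        ENNReal.tsum_le_tsum hinner
      _ = ENNReal.ofReal (∑' q : ℤ, 6 * c * |(q:ℝ)| ^ (-γ)) := by
          rw [ENNReal.ofReal_tsum_of_nonneg (fun q => by positivity) (hsum.mul_left (6 * c))]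
      _ = ENNReal.ofReal (6 * (∑' q : ℤ, |(q : ℝ)| ^ (-γ)) * c) := by
          rw [tsum_mul_left]
          ring_nf
  calc volume {m : ℝ | m ∈ Set.Ioo (0 : ℝ) 1 ∧ ∃ p q : ℤ, q ≠ 0 ∧
          |(p : ℝ) + (q : ℝ) * m| < c * (((p : ℝ) ^ 2 + (q : ℝ) ^ 2) ^ (-(γ / 2)))}
      ≤ volume (⋃ z : ℤ × ℤ, F z) := measure_mono hcover
    _ ≤ ∑' z : ℤ × ℤ, volume (F z) := measure_iUnion_le _
    _ ≤ ∑' z : ℤ × ℤ, B z := ENNReal.tsum_le_tsum hvol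
    _ ≤ ENNReal.ofReal (6 * (∑' q : ℤ, |(q : ℝ)| ^ (-γ)) * c) := hsum2
end
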